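/- arXiv:1710.05382 — 6 statements merged into one kernel-verified Lean document; each statement's English description precedes it below -/
import Mathlib

section
/- Let 0 < γ < 1, p > 0 and C_N, C_λ ∈ (0,∞). Let N : (0,1] → [1,∞) be a nonincreasing function with N(ε) ≤ C_N · ε^{−γ} for all ε ∈ (0,1], and let λ(u) = C_λ · u^p for u > 0. Then for every u > 0, Q(u) ≤ (C_N/C_λ) · 2^γ · (1 − 2^{−(1−γ)/(2p)})^{−p} · W(γ) · u^{−p}, where W(γ) := (1 − 2^{−(1−γ)/2})^{−1}. In particular there is a constant C = C(γ,p) such that Q(u) ≤ C·(C_N/C_λ)·u^{−p} for all u > 0. -/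
open MeasureTheory Set Filter Topology
open scoped ENNReal

noncomputable section

/-- `Q(u)`: the infimum over all sequences `(ε(k)) ⊂ (0,1]`, `ε(0)=1`, nonincreasing,
`ε(k) → 0`, and all positive nonincreasing sequences `(θ(k))` with `Σθ(k)=1`, of the
series `Σ_k N(ε(k+1)) · ε(k) / λ(u·θ(k))`. -/
def QGen (N : ℝ → ℝ) (lam : ℝ → ℝ) (u : ℝ) : ℝ≥0∞ :=
  sInf {r : ℝ≥0∞ | ∃ ε θ : ℕ → ℝ,
    ε 0 = 1 ∧ (∀ k, 0 < ε k) ∧ (∀ k, ε k ≤ 1) ∧ Antitone ε ∧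
      Tendsto ε atTop (𝓝 0) ∧
    (∀ k, 0 < θ k) ∧ Antitone θ ∧ (∑' k, θ k) = 1 ∧
    r = ∑' k, ENNReal.ofReal (N (ε (k + 1))) * ENNReal.ofReal (ε k) /
      ENNReal.ofReal (lam (u * θ k))}

/-- `W(γ) := (1 − 2^{−(1−γ)/2})^{−1}`. -/
def Wgamma (γ : ℝ) : ℝ := (1 - 2 ^ (-(1 - γ) / 2) : ℝ)⁻¹

theorem QGen_polynomial_bound (γ p : ℝ) (hγ0 : 0 < γ) (hγ1 : γ < 1) (hp : 0 < p) :
    (∀ C_N C_lam : ℝ, 0 < C_N → 0 < C_lam → ∀ N : ℝ → ℝ,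
      AntitoneOn N (Ioc (0 : ℝ) 1) → (∀ ε ∈ Ioc (0 : ℝ) 1, 1 ≤ N ε) →
      (∀ ε ∈ Ioc (0 : ℝ) 1, N ε ≤ C_N * ε ^ (-γ)) →
      ∀ u : ℝ, 0 < u →
        QGen N (fun v => C_lam * v ^ p) u ≤
          ENNReal.ofReal ((C_N / C_lam) * 2 ^ γ *
            ((1 - 2 ^ (-(1 - γ) / (2 * p)) : ℝ) ^ (-p)) * Wgamma γ * u ^ (-p)))
    ∧ (∃ C : ℝ, 0 < C ∧ ∀ C_N C_lam : ℝ, 0 < C_N → 0 < C_lam → ∀ N : ℝ → ℝ,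
      AntitoneOn N (Ioc (0 : ℝ) 1) → (∀ ε ∈ Ioc (0 : ℝ) 1, 1 ≤ N ε) →
      (∀ ε ∈ Ioc (0 : ℝ) 1, N ε ≤ C_N * ε ^ (-γ)) →
      ∀ u : ℝ, 0 < u →
        QGen N (fun v => C_lam * v ^ p) u ≤
          ENNReal.ofReal (C * (C_N / C_lam) * u ^ (-p))) := by
  have h2 : (1:ℝ) < 2 := one_lt_two
  set θ₀ : ℝ := (2:ℝ) ^ (-(1 - γ) / (2 * p)) with hθ₀def
  set rr : ℝ := (2:ℝ) ^ (-(1 - γ) / 2) with hrdef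
  have hθ₀pos : 0 < θ₀ := Real.rpow_pos_of_pos two_pos _
  have hθ₀lt : θ₀ < 1 :=
    Real.rpow_lt_one_of_one_lt_of_neg h2
      (div_neg_of_neg_of_pos (by linarith) (by linarith))
  have hrpos : 0 < rr := Real.rpow_pos_of_pos two_pos _
  have hrlt : rr < 1 :=
    Real.rpow_lt_one_of_one_lt_of_neg h2
      (div_neg_of_neg_of_pos (by linarith) (by norm_num))
  have hW : Wgamma γ = (1 - rr)⁻¹ := rfl
  have hWpos : 0 < Wgamma γ := by rw [hW]; exact inv_pos.mpr (by linarith)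
  have main : ∀ C_N C_lam : ℝ, 0 < C_N → 0 < C_lam → ∀ N : ℝ → ℝ,
      AntitoneOn N (Ioc (0 : ℝ) 1) → (∀ ε ∈ Ioc (0 : ℝ) 1, 1 ≤ N ε) →
      (∀ ε ∈ Ioc (0 : ℝ) 1, N ε ≤ C_N * ε ^ (-γ)) →
      ∀ u : ℝ, 0 < u →
        QGen N (fun v => C_lam * v ^ p) u ≤
          ENNReal.ofReal ((C_N / C_lam) * 2 ^ γ * ((1 - θ₀) ^ (-p)) * Wgamma γ * u ^ (-p)) := by
    intro C_N C_lam hCN hCl N hN_anti hN_ge hN_le u hu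
    set ε : ℕ → ℝ := fun k => (2:ℝ) ^ (-(k:ℝ)) with hεdef
    set θ : ℕ → ℝ := fun k => (1 - θ₀) * θ₀ ^ k with hθdef
    have hεpos : ∀ k, 0 < ε k := fun k => Real.rpow_pos_of_pos two_pos _
    have hεle : ∀ k, ε k ≤ 1 := fun k =>
      Real.rpow_le_one_of_one_le_of_nonpos h2.le (neg_nonpos.mpr (Nat.cast_nonneg k))
    have hεmem : ∀ k, ε k ∈ Ioc (0:ℝ) 1 := fun k => ⟨hεpos k, hεle k⟩
    have hε0 : ε 0 = 1 := by simp [hεdef]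
    have hεanti : Antitone ε := fun m n h =>
      Real.rpow_le_rpow_of_exponent_le h2.le (neg_le_neg (Nat.cast_le.mpr h))
    have hεeq : ε = fun k => (2⁻¹ : ℝ) ^ k := by
      funext k
      show (2:ℝ) ^ (-(k:ℝ)) = 2⁻¹ ^ k
      rw [Real.rpow_neg (by norm_num), Real.rpow_natCast, inv_pow]
    have hεtend : Tendsto ε atTop (𝓝 0) := by
      rw [hεeq]
      exact tendsto_pow_atTop_nhds_zero_of_lt_one (by norm_num) (by norm_num)
    have hθpos : ∀ k, 0 < θ k := fun k =>
      mul_pos (by linarith) (pow_pos hθ₀pos k)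
    have hθanti : Antitone θ := fun m n h =>
      mul_le_mul_of_nonneg_left (pow_le_pow_of_le_one hθ₀pos.le hθ₀lt.le h) (by linarith)
    have hθsum : (∑' k, θ k) = 1 := by
      rw [hθdef]
      rw [tsum_mul_left, tsum_geometric_of_lt_one hθ₀pos.le hθ₀lt]
      exact mul_inv_cancel₀ (by linarith)
    set A : ℝ := C_N / C_lam * 2 ^ γ * (1 - θ₀) ^ (-p) * u ^ (-p) with hAdef
    have hApos : 0 < A := by
      apply mul_pos (mul_pos (mul_pos (div_pos hCN hCl) (Real.rpow_pos_of_pos two_pos γ))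
        (Real.rpow_pos_of_pos (by linarith) _)) (Real.rpow_pos_of_pos hu _)
    -- r^k as a power of 2
    have hrk : ∀ k : ℕ, rr ^ k = (2:ℝ) ^ (-(1 - γ) / 2 * (k:ℝ)) := by
      intro k
      rw [hrdef, ← Real.rpow_natCast ((2:ℝ) ^ (-(1 - γ) / 2)) k, ← Real.rpow_mul (by norm_num)]
    have hθ₀k : ∀ k : ℕ, θ₀ ^ k = (2:ℝ) ^ (-(1 - γ) / (2 * p) * (k:ℝ)) := by
      intro k
      rw [hθ₀def, ← Real.rpow_natCast ((2:ℝ) ^ (-(1 - γ) / (2 * p))) k,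
        ← Real.rpow_mul (by norm_num)]
    -- key pointwise bound
    have key : ∀ k : ℕ, N (ε (k + 1)) * ε k / (C_lam * (u * θ k) ^ p) ≤ A * rr ^ k := by
      intro k
      have hDpos : 0 < C_lam * (u * θ k) ^ p :=
        mul_pos hCl (Real.rpow_pos_of_pos (mul_pos hu (hθpos k)) p)
      rw [div_le_iff₀ hDpos]
      have e1 : ε (k + 1) ^ (-γ) = (2:ℝ) ^ (((k:ℝ) + 1) * γ) := by
        rw [hεdef]
        dsimp only
        rw [← Real.rpow_mul (by norm_num)]
        push_cast
        ring_nf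
      have e2 : (u * θ k) ^ p = u ^ p * ((1 - θ₀) ^ p * rr ^ k) := by
        have hce : -(1 - γ) / (2 * p) * (k:ℝ) * p = -(1 - γ) / 2 * (k:ℝ) := by
          field_simp
        show (u * ((1 - θ₀) * θ₀ ^ k)) ^ p = _
        rw [← mul_assoc, Real.mul_rpow (mul_nonneg hu.le (by linarith)) (pow_pos hθ₀pos k).le,
          Real.mul_rpow hu.le (by linarith), hθ₀k k,
          ← Real.rpow_mul (by norm_num), hce, ← hrk k, mul_assoc]
      have hNk : N (ε (k + 1)) ≤ C_N * (2:ℝ) ^ (((k:ℝ) + 1) * γ) := by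
        rw [← e1]; exact hN_le _ (hεmem (k + 1))
      calc N (ε (k + 1)) * ε k ≤ (C_N * (2:ℝ) ^ (((k:ℝ) + 1) * γ)) * ε k := by
            apply mul_le_mul_of_nonneg_right hNk (hεpos k).le
        _ = C_N * (2:ℝ) ^ (γ - (1 - γ) * k) := by
            rw [hεdef]
            dsimp only
            rw [mul_assoc, ← Real.rpow_add two_pos]
            congr 2
            ring
        _ = A * rr ^ k * (C_lam * (u * θ k) ^ p) := by
            rw [e2, hAdef, hrk k]
            rw [Real.rpow_neg hu.le, Real.rpow_neg (by linarith : (0:ℝ) ≤ 1 - θ₀)]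
            have hu_p : (0:ℝ) < u ^ p := Real.rpow_pos_of_pos hu p
            have hθp : (0:ℝ) < (1 - θ₀) ^ p := Real.rpow_pos_of_pos (by linarith) p
            have hmul : (2:ℝ) ^ (γ - (1 - γ) * (k:ℝ)) =
                2 ^ γ * (2 ^ (-(1 - γ) / 2 * (k:ℝ)) * 2 ^ (-(1 - γ) / 2 * (k:ℝ))) := by
              rw [← Real.rpow_add two_pos, ← Real.rpow_add two_pos]
              congr 1
              ring
            rw [hmul]
            field_simp
    -- membership in the set
    have hmem : (∑' k, ENNReal.ofReal (N (ε (k + 1))) * ENNReal.ofReal (ε k) /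
        ENNReal.ofReal ((fun v => C_lam * v ^ p) (u * θ k))) ∈
        {r : ℝ≥0∞ | ∃ ε θ : ℕ → ℝ,
          ε 0 = 1 ∧ (∀ k, 0 < ε k) ∧ (∀ k, ε k ≤ 1) ∧ Antitone ε ∧
            Tendsto ε atTop (𝓝 0) ∧
          (∀ k, 0 < θ k) ∧ Antitone θ ∧ (∑' k, θ k) = 1 ∧
          r = ∑' k, ENNReal.ofReal (N (ε (k + 1))) * ENNReal.ofReal (ε k) /
            ENNReal.ofReal ((fun v => C_lam * v ^ p) (u * θ k))} :=
      ⟨ε, θ, hε0, hεpos, hεle, hεanti, hεtend, hθpos, hθanti, hθsum, rfl⟩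
    refine le_trans (sInf_le hmem) ?_
    -- bound the series
    have hterm : ∀ k : ℕ, ENNReal.ofReal (N (ε (k + 1))) * ENNReal.ofReal (ε k) /
        ENNReal.ofReal (C_lam * (u * θ k) ^ p) ≤ ENNReal.ofReal (A * rr ^ k) := by
      intro k
      have hDpos : 0 < C_lam * (u * θ k) ^ p :=
        mul_pos hCl (Real.rpow_pos_of_pos (mul_pos hu (hθpos k)) p)
      have hNnn : 0 ≤ N (ε (k + 1)) := le_trans zero_le_one (hN_ge _ (hεmem (k + 1)))
      rw [← ENNReal.ofReal_mul hNnn, ← ENNReal.ofReal_div_of_pos hDpos]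
      exact ENNReal.ofReal_le_ofReal (key k)
    calc (∑' k, ENNReal.ofReal (N (ε (k + 1))) * ENNReal.ofReal (ε k) /
          ENNReal.ofReal ((fun v => C_lam * v ^ p) (u * θ k)))
        ≤ ∑' k, ENNReal.ofReal (A * rr ^ k) := ENNReal.tsum_le_tsum hterm
      _ = ENNReal.ofReal A * ∑' k, (ENNReal.ofReal rr) ^ k := by
          rw [← ENNReal.tsum_mul_left]
          congr 1
          funext k
          rw [← ENNReal.ofReal_pow hrpos.le, ← ENNReal.ofReal_mul hApos.le]
      _ = ENNReal.ofReal A * ENNReal.ofReal (Wgamma γ) := by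
          rw [ENNReal.tsum_geometric]
          congr 1
          rw [hW, ← ENNReal.ofReal_one, ← ENNReal.ofReal_sub _ hrpos.le,
            ENNReal.ofReal_inv_of_pos (by linarith)]
      _ = ENNReal.ofReal (C_N / C_lam * 2 ^ γ * (1 - θ₀) ^ (-p) * Wgamma γ * u ^ (-p)) := by
          rw [← ENNReal.ofReal_mul hApos.le]
          congr 1
          rw [hAdef]
          ring
  constructor
  · exact main
  · refine ⟨2 ^ γ * (1 - θ₀) ^ (-p) * Wgamma γ, ?_, ?_⟩
    · have h1 : (0:ℝ) < 2 ^ γ := Real.rpow_pos_of_pos two_pos γ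
      have h3 : (0:ℝ) < (1 - θ₀) ^ (-p) := Real.rpow_pos_of_pos (by linarith) _
      positivity
    · intro C_N C_lam hCN hCl N hN_anti hN_ge hN_le u hu
      refine le_trans (main C_N C_lam hCN hCl N hN_anti hN_ge hN_le u hu) ?_
      apply le_of_eq
      congr 1
      ring

end
end

section
/- Let (Ω, 𝓕, P) be a probability space and let ξ_1,…,ξ_k be real random variables. For each i let 1 < b_i ≤ ∞ and ψ_i : [1,b_i) → (0,∞), and suppose ‖ξ_i‖_{Gψ_i} := sup_{p ∈ [1,b_i)} (E|ξ_i|^p)^{1/p} / ψ_i(p) < ∞. Let p_1,…,p_k ≥ 1 and a_1,…,a_k > 1 with Σ_{i=1}^k 1/a_i = 1 and a_i·p_i ∈ [1, b_i) for every i. Then for every u > 0, P( min_{1 ≤ i ≤ k} |ξ_i| > u ) ≤ u^{−Σ_{i=1}^k p_i} · ∏_{i=1}^k ( ‖ξ_i‖_{Gψ_i} · ψ_i(a_i p_i) )^{p_i}. -/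
open MeasureTheory Set Filter
open scoped ENNReal

noncomputable section

/-- The Grand Lebesgue Space norm `‖ζ‖_{Gψ} = sup_{p ∈ [1,b)} (E|ζ|^p)^{1/p} / ψ(p)`,
computed in `[0,∞]`; here `b ∈ (1,∞]` is encoded as an element of `ℝ≥0∞`. -/
def glsNorm {Ω : Type*} [MeasurableSpace Ω] (P : Measure Ω) (b : ℝ≥0∞)
    (ψ : ℝ → ℝ) (ζ : Ω → ℝ) : ℝ≥0∞ :=
  ⨆ p ∈ {p : ℝ | 1 ≤ p ∧ ENNReal.ofReal p < b},
    (∫⁻ ω, ENNReal.ofReal (|ζ ω| ^ p) ∂P) ^ (1 / p) / ENNReal.ofReal (ψ p)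

/-! The event `min_i |ξ_i| > u` forces `∏ |ξ_i|^{p_i} ≥ u^{Σ p_i}`, so Markov's inequality bounds its
probability by `u^{-Σ p_i} E ∏ |ξ_i|^{p_i}`. Hölder's inequality with the conjugate exponents `a_i`
bounds that expectation by `∏ (E|ξ_i|^{a_i p_i})^{1/a_i} = ∏ ((E|ξ_i|^{a_i p_i})^{1/(a_i p_i)})^{p_i}`,
and each inner moment is at most `‖ξ_i‖_{Gψ_i} ψ_i(a_i p_i)` since `a_i p_i ∈ [1, b_i)`. -/

namespace ENNReal

theorem rpow_sum {ι : Type*} (s : Finset ι) (f : ι → ℝ) {c : ℝ≥0∞} (hc₀ : c ≠ 0) (hc : c ≠ ∞) :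
    c ^ (∑ i ∈ s, f i) = ∏ i ∈ s, c ^ f i := by
  classical
  induction s using Finset.induction with
  | empty => simp
  | insert j s hj ih => rw [Finset.sum_insert hj, Finset.prod_insert hj, rpow_add _ _ hc₀ hc, ih]

theorem rpow_one_div_eq_rpow_one_div_mul_rpow (x : ℝ≥0∞) {a p : ℝ} (ha : a ≠ 0) (hp : p ≠ 0) :
    x ^ (1 / a) = (x ^ (1 / (a * p))) ^ p := by
  rw [← rpow_mul]
  congr 1
  field_simp

end ENNReal

section

variable {Ω ι : Type*} [MeasurableSpace Ω] {μ : Measure Ω} [Fintype ι]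

theorem measure_forall_le_le_rpow_neg_mul_lintegral_prod {f : ι → Ω → ℝ≥0∞}
    (hf : ∀ i, AEMeasurable (f i) μ) (p : ι → ℝ) (hp : ∀ i, 0 ≤ p i) {c : ℝ≥0∞}
    (hc₀ : c ≠ 0) (hc : c ≠ ∞) :
    μ {ω | ∀ i, c ≤ f i ω} ≤ c ^ (-∑ i, p i) * ∫⁻ ω, ∏ i, f i ω ^ p i ∂μ := by
  have hsub : {ω | ∀ i, c ≤ f i ω} ⊆ {ω | c ^ (∑ i, p i) ≤ ∏ i, f i ω ^ p i} := fun ω hω => by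
    rw [mem_ofPred_eq, ENNReal.rpow_sum _ _ hc₀ hc]
    exact Finset.prod_le_prod' fun i _ => ENNReal.rpow_le_rpow (hω i) (hp i)
  calc μ {ω | ∀ i, c ≤ f i ω}
      ≤ μ {ω | c ^ (∑ i, p i) ≤ ∏ i, f i ω ^ p i} := measure_mono hsub
    _ ≤ (∫⁻ ω, ∏ i, f i ω ^ p i ∂μ) / c ^ (∑ i, p i) :=
        meas_ge_le_lintegral_div (Finset.aemeasurable_fun_prod _ fun i _ => (hf i).pow_const _)
          (ENNReal.rpow_pos (pos_iff_ne_zero.2 hc₀) hc).ne' (ENNReal.rpow_ne_top_of_ne_zero hc₀ hc)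
    _ = c ^ (-∑ i, p i) * ∫⁻ ω, ∏ i, f i ω ^ p i ∂μ := by
        rw [ENNReal.div_eq_inv_mul, ENNReal.rpow_neg]

theorem lintegral_prod_rpow_le_prod_lintegral_rpow {f : ι → Ω → ℝ≥0∞}
    (hf : ∀ i, AEMeasurable (f i) μ) (p : ι → ℝ) {a : ι → ℝ} (ha : ∀ i, 0 < a i)
    (hsum : ∑ i, 1 / a i = 1) :
    ∫⁻ ω, ∏ i, f i ω ^ p i ∂μ ≤ ∏ i, (∫⁻ ω, f i ω ^ (a i * p i) ∂μ) ^ (1 / a i) := by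
  calc ∫⁻ ω, ∏ i, f i ω ^ p i ∂μ
      = ∫⁻ ω, ∏ i, (f i ω ^ (a i * p i)) ^ (1 / a i) ∂μ := by
        refine lintegral_congr fun ω => Finset.prod_congr rfl fun i _ => ?_
        rw [← ENNReal.rpow_mul, mul_comm (a i), mul_assoc, mul_one_div_cancel (ha i).ne', mul_one]
    _ ≤ ∏ i, (∫⁻ ω, f i ω ^ (a i * p i) ∂μ) ^ (1 / a i) :=
        ENNReal.lintegral_prod_norm_pow_le _ (fun i _ => (hf i).pow_const _) hsum
          fun i _ => (one_div_pos.2 (ha i)).le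

end

theorem lintegral_rpow_le_glsNorm_mul {Ω : Type*} [MeasurableSpace Ω] (P : Measure Ω)
    {b : ℝ≥0∞} {ψ : ℝ → ℝ} (ζ : Ω → ℝ) {q : ℝ} (hq : 1 ≤ q) (hqb : ENNReal.ofReal q < b)
    (hψ : 0 < ψ q) :
    (∫⁻ ω, ENNReal.ofReal |ζ ω| ^ q ∂P) ^ (1 / q) ≤ glsNorm P b ψ ζ * ENNReal.ofReal (ψ q) := by
  rw [← ENNReal.div_le_iff_le_mul (Or.inl (ENNReal.ofReal_ne_zero_iff.2 hψ))
    (Or.inl ENNReal.ofReal_ne_top)]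
  have hmoment : ∫⁻ ω, ENNReal.ofReal |ζ ω| ^ q ∂P = ∫⁻ ω, ENNReal.ofReal (|ζ ω| ^ q) ∂P :=
    lintegral_congr fun ω => ENNReal.ofReal_rpow_of_nonneg (abs_nonneg _) (by linarith)
  rw [hmoment]
  exact le_iSup₂ (f := fun r (_ : r ∈ {r : ℝ | 1 ≤ r ∧ ENNReal.ofReal r < b}) =>
    (∫⁻ ω, ENNReal.ofReal (|ζ ω| ^ r) ∂P) ^ (1 / r) / ENNReal.ofReal (ψ r)) q ⟨hq, hqb⟩

theorem min_tail_GLS_bound_general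
    {Ω : Type*} [MeasurableSpace Ω] (P : Measure Ω)
    (k : ℕ)
    (ξ : Fin k → Ω → ℝ) (hξ : ∀ i, Measurable (ξ i))
    (b : Fin k → ℝ≥0∞)
    (ψ : Fin k → ℝ → ℝ)
    (hψpos : ∀ i, ∀ p : ℝ, 1 ≤ p → ENNReal.ofReal p < b i → 0 < ψ i p)
    (p : Fin k → ℝ) (hp : ∀ i, 1 ≤ p i)
    (a : Fin k → ℝ) (ha : ∀ i, 1 < a i) (hsum : ∑ i, 1 / a i = 1)
    (hap : ∀ i, 1 ≤ a i * p i ∧ ENNReal.ofReal (a i * p i) < b i)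
    (u : ℝ) (hu : 0 < u) :
    P {ω | ∀ i, u < |ξ i ω|} ≤
      ENNReal.ofReal u ^ (-(∑ i, p i)) *
        ∏ i, (glsNorm P (b i) (ψ i) (ξ i) * ENNReal.ofReal (ψ i (a i * p i))) ^ (p i) := by
  set g : Fin k → Ω → ℝ≥0∞ := fun i ω => ENNReal.ofReal |ξ i ω|
  have hg : ∀ i, AEMeasurable (g i) P := fun i => (hξ i).abs.ennreal_ofReal.aemeasurable
  have hp₀ : ∀ i, 0 < p i := fun i => zero_lt_one.trans_le (hp i)
  have ha₀ : ∀ i, 0 < a i := fun i => zero_lt_one.trans (ha i)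
  have hfactor : ∀ i, (∫⁻ ω, g i ω ^ (a i * p i) ∂P) ^ (1 / a i) ≤
      (glsNorm P (b i) (ψ i) (ξ i) * ENNReal.ofReal (ψ i (a i * p i))) ^ p i := fun i => by
    rw [ENNReal.rpow_one_div_eq_rpow_one_div_mul_rpow _ (ha₀ i).ne' (hp₀ i).ne']
    exact ENNReal.rpow_le_rpow (lintegral_rpow_le_glsNorm_mul P (ξ i) (hap i).1 (hap i).2
      (hψpos i _ (hap i).1 (hap i).2)) (hp₀ i).le
  calc P {ω | ∀ i, u < |ξ i ω|}
      ≤ P {ω | ∀ i, ENNReal.ofReal u ≤ g i ω} :=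
        measure_mono fun ω hω i => ENNReal.ofReal_le_ofReal (hω i).le
    _ ≤ ENNReal.ofReal u ^ (-∑ i, p i) * ∫⁻ ω, ∏ i, g i ω ^ p i ∂P :=
        measure_forall_le_le_rpow_neg_mul_lintegral_prod hg p (fun i => (hp₀ i).le)
          (ENNReal.ofReal_ne_zero_iff.2 hu) ENNReal.ofReal_ne_top
    _ ≤ ENNReal.ofReal u ^ (-∑ i, p i) * ∏ i, (∫⁻ ω, g i ω ^ (a i * p i) ∂P) ^ (1 / a i) := by
        gcongr
        exact lintegral_prod_rpow_le_prod_lintegral_rpow hg p ha₀ hsum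
    _ ≤ _ := by gcongr with i; exact hfactor i

/-- Tail estimate for the minimum of random variables from Grand Lebesgue Spaces:
`P( min_i |ξ_i| > u ) ≤ u^{−Σ p_i} · ∏ ( ‖ξ_i‖_{Gψ_i} · ψ_i(a_i p_i) )^{p_i}`. -/
theorem min_tail_GLS_bound
    {Ω : Type*} [MeasurableSpace Ω] (P : Measure Ω) [IsProbabilityMeasure P]
    (k : ℕ) (hk : 1 ≤ k)
    (ξ : Fin k → Ω → ℝ) (hξ : ∀ i, Measurable (ξ i))
    (b : Fin k → ℝ≥0∞) (hb : ∀ i, 1 < b i)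
    (ψ : Fin k → ℝ → ℝ)
    (hψpos : ∀ i, ∀ p : ℝ, 1 ≤ p → ENNReal.ofReal p < b i → 0 < ψ i p)
    (hGfin : ∀ i, glsNorm P (b i) (ψ i) (ξ i) < ∞)
    (p : Fin k → ℝ) (hp : ∀ i, 1 ≤ p i)
    (a : Fin k → ℝ) (ha : ∀ i, 1 < a i) (hsum : ∑ i, 1 / a i = 1)
    (hap : ∀ i, 1 ≤ a i * p i ∧ ENNReal.ofReal (a i * p i) < b i)
    (u : ℝ) (hu : 0 < u) :
    P {ω | ∀ i, u < |ξ i ω|} ≤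
      ENNReal.ofReal u ^ (-(∑ i, p i)) *
        ∏ i, (glsNorm P (b i) (ψ i) (ξ i) * ENNReal.ofReal (ψ i (a i * p i))) ^ (p i) :=
  min_tail_GLS_bound_general P k ξ hξ b ψ hψpos p hp a ha hsum hap u hu

end
end

section
/- Let (Ω, 𝓕, P) be a probability space, 1 < b ≤ ∞, ψ : [1,b) → (0,∞), and let ζ be a real random variable with ‖ζ‖ := sup_{p ∈ [1,b)} (E|ζ|^p)^{1/p} / ψ(p) ∈ (0,∞). Define v_ψ(p) := p·ln ψ(p) for p ∈ [1,b), and let v_ψ*(y) := sup_{p ∈ [1,b)} ( p·y − v_ψ(p) ) be its Young–Fenchel (Legendre) transform. Then for every y ≥ e·‖ζ‖, P( |ζ| > y ) ≤ exp( − v_ψ*( ln( y / ‖ζ‖ ) ) ). -/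
open MeasureTheory Set Filter
open scoped ENNReal

noncomputable section

/-- The Young–Fenchel (Legendre) transform `v_ψ*(y) = sup_{p ∈ [1,b)} ( p·y − v_ψ(p) )`
of `v_ψ(p) = p·ln ψ(p)`. -/
def youngFenchel (b : ℝ≥0∞) (ψ : ℝ → ℝ) (y : ℝ) : ℝ :=
  sSup {w : ℝ | ∃ p : ℝ, 1 ≤ p ∧ ENNReal.ofReal p < b ∧
    w = p * y - p * Real.log (ψ p)}

/-! Every admissible moment bounds the tail by Markov's inequality,
`P(|ζ| > y) ≤ E|ζ|^p / y^p ≤ (‖ζ‖ ψ(p) / y)^p = exp(-(p ln(y/‖ζ‖) - p ln ψ(p)))`,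
and optimising over `p` turns the exponent into the Young–Fenchel transform. -/

namespace GrandLebesgue

variable {Ω : Type*} [MeasurableSpace Ω] {P : Measure Ω} {b : ℝ≥0∞} {ψ : ℝ → ℝ}
  {ζ : Ω → ℝ} {p y : ℝ}

theorem lintegral_rpow_le_glsNorm_mul (hp1 : 1 ≤ p) (hpb : ENNReal.ofReal p < b)
    (hψ : 0 < ψ p) :
    ∫⁻ ω, ENNReal.ofReal (|ζ ω| ^ p) ∂P ≤ (glsNorm P b ψ ζ * ENNReal.ofReal (ψ p)) ^ p := by
  have hp0 : 0 < p := zero_lt_one.trans_le hp1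
  have hnorm : (∫⁻ ω, ENNReal.ofReal (|ζ ω| ^ p) ∂P) ^ (1 / p) / ENNReal.ofReal (ψ p)
      ≤ glsNorm P b ψ ζ :=
    le_biSup (fun p => (∫⁻ ω, ENNReal.ofReal (|ζ ω| ^ p) ∂P) ^ (1 / p) / ENNReal.ofReal (ψ p))
      (show p ∈ {p : ℝ | 1 ≤ p ∧ ENNReal.ofReal p < b} from ⟨hp1, hpb⟩)
  rw [ENNReal.div_le_iff (ENNReal.ofReal_pos.2 hψ).ne' ENNReal.ofReal_ne_top] at hnorm
  calc ∫⁻ ω, ENNReal.ofReal (|ζ ω| ^ p) ∂P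
      = ((∫⁻ ω, ENNReal.ofReal (|ζ ω| ^ p) ∂P) ^ (1 / p)) ^ p := by
        rw [← ENNReal.rpow_mul, one_div_mul_cancel hp0.ne', ENNReal.rpow_one]
    _ ≤ _ := ENNReal.rpow_le_rpow hnorm hp0.le

theorem measure_lt_abs_le_lintegral_rpow_div (hζ : AEMeasurable ζ P) (hp : 0 < p) (hy : 0 < y) :
    P {ω | y < |ζ ω|} ≤
      (∫⁻ ω, ENNReal.ofReal (|ζ ω| ^ p) ∂P) / ENNReal.ofReal (y ^ p) := by
  refine (measure_mono fun ω (hω : y < |ζ ω|) => ?_).trans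
    (meas_ge_le_lintegral_div (hζ.abs.pow_const p).ennreal_ofReal
      (ENNReal.ofReal_pos.2 (Real.rpow_pos_of_pos hy p)).ne' ENNReal.ofReal_ne_top)
  exact ENNReal.ofReal_le_ofReal (Real.rpow_le_rpow hy.le hω.le hp.le)

theorem measureReal_lt_abs_le_rpow (hζ : AEMeasurable ζ P) (hfin : glsNorm P b ψ ζ ≠ ∞)
    (hp1 : 1 ≤ p) (hpb : ENNReal.ofReal p < b) (hψ : 0 < ψ p) (hy : 0 < y) :
    P.real {ω | y < |ζ ω|} ≤ ((glsNorm P b ψ ζ).toReal * ψ p / y) ^ p := by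
  have hp0 : 0 < p := zero_lt_one.trans_le hp1
  have hmarkov : P {ω | y < |ζ ω|} ≤
      (glsNorm P b ψ ζ * ENNReal.ofReal (ψ p)) ^ p / ENNReal.ofReal (y ^ p) :=
    (measure_lt_abs_le_lintegral_rpow_div hζ hp0 hy).trans
      (ENNReal.div_le_div_right (lintegral_rpow_le_glsNorm_mul hp1 hpb hψ) _)
  have hbound_ne_top :
      (glsNorm P b ψ ζ * ENNReal.ofReal (ψ p)) ^ p / ENNReal.ofReal (y ^ p) ≠ ∞ :=
    ENNReal.div_ne_top (by finiteness)
      (ENNReal.ofReal_pos.2 (Real.rpow_pos_of_pos hy p)).ne'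
  refine (ENNReal.toReal_mono hbound_ne_top hmarkov).trans_eq ?_
  rw [ENNReal.toReal_div, ← ENNReal.toReal_rpow, ENNReal.toReal_mul,
    ENNReal.toReal_ofReal hψ.le, ENNReal.toReal_ofReal (Real.rpow_nonneg hy.le p),
    Real.div_rpow (by positivity) hy.le]

end GrandLebesgue

theorem Real.rpow_mul_div_eq_exp {a c y : ℝ} (ha : 0 < a) (hc : 0 < c) (hy : 0 < y) (p : ℝ) :
    (a * c / y) ^ p = Real.exp (-(p * Real.log (y / a) - p * Real.log c)) := by
  rw [Real.rpow_def_of_pos (by positivity), Real.log_div (by positivity) hy.ne',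
    Real.log_mul ha.ne' hc.ne', Real.log_div hy.ne' ha.ne']
  ring_nf

theorem Real.le_exp_neg_sSup {S : Set ℝ} (hS : S.Nonempty) {x : ℝ}
    (h : ∀ w ∈ S, x ≤ Real.exp (-w)) : x ≤ Real.exp (-sSup S) := by
  rcases le_or_gt x 0 with hx | hx
  · exact hx.trans (Real.exp_pos _).le
  have hsSup : sSup S ≤ -Real.log x := csSup_le hS fun w hw => by
    have := Real.log_le_log hx (h w hw)
    rw [Real.log_exp] at this
    linarith
  calc x = Real.exp (Real.log x) := (Real.exp_log hx).symm
    _ ≤ Real.exp (-sSup S) := Real.exp_le_exp.2 (by linarith)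

/-- Exponential tail estimate for a random variable with finite positive
Grand Lebesgue Space norm:
`P(|ζ| > y) ≤ exp( −v_ψ*( ln(y/‖ζ‖) ) )` for `y ≥ e·‖ζ‖`. -/
theorem GLS_tail_estimate
    {Ω : Type*} [MeasurableSpace Ω] (P : Measure Ω) [IsProbabilityMeasure P]
    (b : ℝ≥0∞) (hb : 1 < b)
    (ψ : ℝ → ℝ) (hψpos : ∀ p : ℝ, 1 ≤ p → ENNReal.ofReal p < b → 0 < ψ p)
    (ζ : Ω → ℝ) (hζ : Measurable ζ)
    (hpos : 0 < glsNorm P b ψ ζ) (hfin : glsNorm P b ψ ζ ≠ ∞) :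
    ∀ y : ℝ, Real.exp 1 * (glsNorm P b ψ ζ).toReal ≤ y →
      P {ω | y < |ζ ω|} ≤
        ENNReal.ofReal
          (Real.exp (-(youngFenchel b ψ (Real.log (y / (glsNorm P b ψ ζ).toReal))))) := by
  intro y hy
  have hN : 0 < (glsNorm P b ψ ζ).toReal := ENNReal.toReal_pos hpos.ne' hfin
  have hy0 : 0 < y := lt_of_lt_of_le (by positivity) hy
  rw [← ofReal_measureReal, youngFenchel]
  refine ENNReal.ofReal_le_ofReal (Real.le_exp_neg_sSup ?_ ?_)
  · exact ⟨_, 1, le_rfl, by simpa using hb, rfl⟩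
  rintro _ ⟨p, hp1, hpb, rfl⟩
  have hψp : 0 < ψ p := hψpos p hp1 hpb
  rw [← Real.rpow_mul_div_eq_exp hN hψp hy0]
  exact GrandLebesgue.measureReal_lt_abs_le_rpow hζ.aemeasurable hfin hp1 hpb hψp hy0

end
end

section
/- Let γ ∈ (0,1), v > 0, C_1 > 0 and W ≥ 1 be constants, and let f : [1,∞) → (0,∞) satisfy f(p) ≤ exp( C_1 · p^{1+v} ) for all p ≥ 1. Then there exist constants C_2 > 0 and C_3 ≥ 1, depending only on C_1, v and W, such that for every u ≥ e, inf_{p ≥ 1} [ f(p) · W^{p+1} · u^{−p} ] ≤ C_3 · exp( − C_2 · (ln u)^{1 + 1/v} ). -/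
open Set Filter

/-!
Bound the infimum by its value at a single `p`. Writing `L = log u`, the logarithm of
`f(p)·W^{p+1}·u^{-p}` is at most `C₁ p^{1+v} + (p+1) log W - L p`. For large `L` take
`p = c L^{1/v}` with `C₁ c^v ≤ 1/4`: then `C₁ p^{1+v}` and `(p+1) log W` each cost at most a
quarter of the gain `L p = c L^{1+1/v}`. For the bounded range of small `L`, `p = 1` works and
the loss is absorbed into `C₃`.
-/

namespace InfPolynomialTradeOff

open Real

lemma exists_pos_mul_rpow_le_quarter (C : ℝ) {v : ℝ} (hv : 0 < v) :
    ∃ c : ℝ, 0 < c ∧ C * c ^ v ≤ 1 / 4 := by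
  have hlim : Tendsto (fun c : ℝ => C * c ^ v) (nhdsWithin 0 (Ioi 0)) (nhds 0) := by
    have := ((continuousAt_rpow_const 0 v (Or.inr hv.le)).tendsto.const_mul C).mono_left
      (nhdsWithin_le_nhds (s := Ioi 0))
    simpa [zero_rpow hv.ne'] using this
  obtain ⟨c, hcC, hc⟩ :=
    ((hlim.eventually (ge_mem_nhds (by norm_num : (0 : ℝ) < 1 / 4))).and
      self_mem_nhdsWithin).exists
  exact ⟨c, hc, hcC⟩

lemma sInf_image_le {g : ℝ → ℝ} (hg : ∀ p, 1 ≤ p → 0 ≤ g p) {p : ℝ} (hp : 1 ≤ p) :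
    sInf {x : ℝ | ∃ p : ℝ, 1 ≤ p ∧ x = g p} ≤ g p :=
  csInf_le ⟨0, by rintro _ ⟨q, hq, rfl⟩; exact hg q hq⟩ ⟨p, hp, rfl⟩

lemma mul_rpow_mul_rpow_neg_le_exp {f C₁ v W u p : ℝ} (hf : f ≤ exp (C₁ * p ^ (1 + v)))
    (hW : 0 < W) (hu : 0 < u) :
    f * W ^ (p + 1) * u ^ (-p) ≤ exp (C₁ * p ^ (1 + v) + log W * (p + 1) - log u * p) := by
  have hWu : 0 ≤ W ^ (p + 1) * u ^ (-p) := by positivity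
  calc f * W ^ (p + 1) * u ^ (-p) = f * (W ^ (p + 1) * u ^ (-p)) := mul_assoc _ _ _
    _ ≤ exp (C₁ * p ^ (1 + v)) * (W ^ (p + 1) * u ^ (-p)) := mul_le_mul_of_nonneg_right hf hWu
    _ = exp (C₁ * p ^ (1 + v) + log W * (p + 1) - log u * p) := by
      rw [rpow_def_of_pos hW, rpow_def_of_pos hu, ← exp_add, ← exp_add]
      ring_nf

lemma trade_off_exponent_le {C₁ v c q a : ℝ} (hc : 0 < c) (hcC : C₁ * c ^ v ≤ 1 / 4)
    (hq : 0 < q) (ha : 0 ≤ a) (haq : 8 * a ≤ q ^ v) (hcq : 1 ≤ c * q) :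
    C₁ * (c * q) ^ (1 + v) + a * (c * q + 1) - q ^ v * (c * q) ≤ -(c / 2 * q ^ (1 + v)) := by
  have hqv : q ^ (1 + v) = q ^ v * q := by rw [add_comm, rpow_add_one hq.ne']
  have hgain : q ^ v * (c * q) = c * q ^ (1 + v) := by rw [hqv]; ring
  have hpoly : C₁ * (c * q) ^ (1 + v) ≤ 1 / 4 * (c * q ^ (1 + v)) := by
    have hsplit : C₁ * (c * q) ^ (1 + v) = C₁ * c ^ v * (c * q ^ (1 + v)) := by
      rw [mul_rpow hc.le hq.le, add_comm 1 v, rpow_add_one hc.ne']; ring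
    rw [hsplit]
    exact mul_le_mul_of_nonneg_right hcC (by positivity)
  have hlin : a * (c * q + 1) ≤ 1 / 4 * (q ^ v * (c * q)) := by
    have : a * (c * q + 1) ≤ a * (2 * (c * q)) := mul_le_mul_of_nonneg_left (by linarith) ha
    nlinarith
  linarith

lemma exists_exponent_le_of_large {C₁ v c L a : ℝ} (hv : 0 < v) (hc : 0 < c)
    (hcC : C₁ * c ^ v ≤ 1 / 4) (ha : 0 ≤ a) (hcL : c ^ (-v) ≤ L) (haL : 8 * a ≤ L) :
    ∃ p, 1 ≤ p ∧ C₁ * p ^ (1 + v) + a * (p + 1) - L * p ≤ -(c / 2 * L ^ (1 + 1 / v)) := by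
  have hL : 0 < L := (rpow_pos_of_pos hc _).trans_le hcL
  set q := L ^ (1 / v) with hq_def
  have hq : 0 < q := rpow_pos_of_pos hL _
  have hqv : q ^ v = L := by rw [hq_def, one_div, rpow_inv_rpow hL.le hv.ne']
  have hq1v : q ^ (1 + v) = L ^ (1 + 1 / v) := by
    rw [hq_def, ← rpow_mul hL.le]; congr 1; field_simp; ring
  have hcq : 1 ≤ c * q := by
    have : c⁻¹ ≤ q := by
      rwa [← rpow_le_rpow_iff (by positivity) hq.le hv, inv_rpow hc.le, ← rpow_neg hc.le, hqv]
    calc (1 : ℝ) = c * c⁻¹ := (mul_inv_cancel₀ hc.ne').symm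
      _ ≤ c * q := mul_le_mul_of_nonneg_left this hc.le
  refine ⟨c * q, hcq, ?_⟩
  rw [← hq1v, ← hqv]
  exact trade_off_exponent_le hc hcC hq ha (hqv ▸ haL) hcq

end InfPolynomialTradeOff

open Real InfPolynomialTradeOff in
theorem inf_polynomial_trade_off_general
    (v C₁ W : ℝ) (hv : 0 < v) (hC₁ : 0 < C₁) (hW : 1 ≤ W) :
    ∃ C₂ C₃ : ℝ, 0 < C₂ ∧ 1 ≤ C₃ ∧
      ∀ f : ℝ → ℝ, (∀ p : ℝ, 1 ≤ p → 0 < f p) →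
        (∀ p : ℝ, 1 ≤ p → f p ≤ Real.exp (C₁ * p ^ (1 + v))) →
        ∀ u : ℝ, Real.exp 1 ≤ u →
          sInf {x : ℝ | ∃ p : ℝ, 1 ≤ p ∧ x = f p * W ^ (p + 1) * u ^ (-p)} ≤
            C₃ * Real.exp (-(C₂ * Real.log u ^ (1 + 1 / v))) := by
  obtain ⟨c, hc, hcC⟩ := exists_pos_mul_rpow_le_quarter C₁ hv
  have hlogW : 0 ≤ log W := log_nonneg hW
  set L₀ := max (c ^ (-v)) (8 * log W)
  refine ⟨c / 2, exp (C₁ + 2 * log W + c / 2 * L₀ ^ (1 + 1 / v)), by positivity,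
    one_le_exp (by positivity), fun f hfpos hf u hu => ?_⟩
  have hu0 : 0 < u := (exp_pos 1).trans_le hu
  have hL : 1 ≤ log u := by simpa using log_le_log (exp_pos 1) hu
  have hinf : ∀ p, 1 ≤ p →
      sInf {x : ℝ | ∃ p : ℝ, 1 ≤ p ∧ x = f p * W ^ (p + 1) * u ^ (-p)} ≤
        exp (C₁ * p ^ (1 + v) + log W * (p + 1) - log u * p) := fun p hp =>
    (sInf_image_le (fun q hq => by have := hfpos q hq; positivity) hp).trans
      (mul_rpow_mul_rpow_neg_le_exp (hf p hp) (by linarith) hu0)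
  rcases le_total (log u) L₀ with hsmall | hlarge
  · refine (hinf 1 le_rfl).trans ?_
    rw [← exp_add, exp_le_exp, one_rpow]
    have := rpow_le_rpow (by linarith) hsmall (by positivity : 0 ≤ 1 + 1 / v)
    nlinarith
  · obtain ⟨p, hp, hexp⟩ := exists_exponent_le_of_large hv hc hcC hlogW
      ((le_max_left _ _).trans hlarge) ((le_max_right _ _).trans hlarge)
    exact (hinf p hp).trans ((exp_le_exp.2 hexp).trans
      (le_mul_of_one_le_left (exp_pos _).le (one_le_exp (by positivity))))

/-- If `f(p) ≤ exp(C₁·p^{1+v})` for `p ≥ 1`, then for constants `C₂ > 0`, `C₃ ≥ 1`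
depending only on `C₁`, `v` and `W`,
`inf_{p ≥ 1} f(p)·W^{p+1}·u^{−p} ≤ C₃·exp(−C₂·(ln u)^{1+1/v})` for every `u ≥ e`. -/
theorem inf_polynomial_trade_off (γ : ℝ) (hγ : γ ∈ Ioo (0 : ℝ) 1)
    (v C₁ W : ℝ) (hv : 0 < v) (hC₁ : 0 < C₁) (hW : 1 ≤ W) :
    ∃ C₂ C₃ : ℝ, 0 < C₂ ∧ 1 ≤ C₃ ∧
      ∀ f : ℝ → ℝ, (∀ p : ℝ, 1 ≤ p → 0 < f p) →
        (∀ p : ℝ, 1 ≤ p → f p ≤ Real.exp (C₁ * p ^ (1 + v))) →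
        ∀ u : ℝ, Real.exp 1 ≤ u →
          sInf {x : ℝ | ∃ p : ℝ, 1 ≤ p ∧ x = f p * W ^ (p + 1) * u ^ (-p)} ≤
            C₃ * Real.exp (-(C₂ * Real.log u ^ (1 + 1 / v))) :=
  inf_polynomial_trade_off_general v C₁ W hv hC₁ hW
end

section
/- Let (Ω, 𝓕, P) be a probability space and let κ : (0,1] × Ω → [0,∞) be a family of random variables such that κ(h,·) is measurable for each h ∈ (0,1], h ↦ κ(h,ω) is nondecreasing for every ω ∈ Ω, κ(1,·) < ∞ almost surely, and P( lim_{h→0+} κ(h,·) = 0 ) = 1. Then there exist a random variable Θ : Ω → [0,∞) which is finite almost surely and a nondecreasing deterministic function ω_0 : (0,1] → (0,∞) with lim_{h→0+} ω_0(h) = 0, such that almost surely κ(h,·) ≤ Θ · ω_0(h) for all h ∈ (0,1] simultaneously. -/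
/-!
Along a sequence `qₙ ↓ 0` chosen so that `P(κ(qₙ) > 2⁻ⁿ) ≤ 2⁻ⁿ` (possible because almost sure
convergence implies convergence in probability), Borel–Cantelli makes `2ⁿ κ(qₙ)` almost surely
bounded, and `Θ` is its supremum. Setting `ω₀ := 2⁻ⁿ` on `(qₙ₊₁, qₙ]`, monotonicity of `κ` gives
`κ(h) ≤ κ(qₙ) ≤ Θ 2⁻ⁿ`.
-/

open MeasureTheory Set Filter Topology
open scoped ENNReal

section IntervalIndex

variable {q : ℕ → ℝ} {h h₁ h₂ : ℝ}

/-- For `q` antitone with limit `0` and `0 < h ≤ q 0`, the `n` with `q (n + 1) < h ≤ q n`. -/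
noncomputable def intervalIndex (q : ℕ → ℝ) (h : ℝ) : ℕ := sInf {n | q (n + 1) < h}

theorem le_apply_intervalIndex (h0 : h ≤ q 0) : h ≤ q (intervalIndex q h) := by
  rcases hN : intervalIndex q h with _ | k
  · exact h0
  · exact not_lt.1 (Nat.notMem_of_lt_sInf (hN ▸ k.lt_succ_self : k < intervalIndex q h))

theorem apply_intervalIndex_succ_lt (hq : Tendsto q atTop (𝓝 0)) (hh : 0 < h) :
    q (intervalIndex q h + 1) < h :=
  Nat.sInf_mem (((tendsto_add_atTop_iff_nat 1).2 hq).eventually_lt_const hh).exists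

theorem intervalIndex_le_of_le (hq : Tendsto q atTop (𝓝 0)) (h₁pos : 0 < h₁) (h₁₂ : h₁ ≤ h₂) :
    intervalIndex q h₂ ≤ intervalIndex q h₁ :=
  Nat.sInf_le ((apply_intervalIndex_succ_lt hq h₁pos).trans_le h₁₂)

theorem le_intervalIndex (hq : Antitone q) (hlim : Tendsto q atTop (𝓝 0)) (hh : 0 < h) {m : ℕ}
    (hm : h ≤ q m) : m ≤ intervalIndex q h := by
  by_contra! hlt
  exact ((hq hlt).trans_lt (apply_intervalIndex_succ_lt hlim hh)).not_ge hm

theorem tendsto_intervalIndex (hq : Antitone q) (hlim : Tendsto q atTop (𝓝 0))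
    (hpos : ∀ n, 0 < q n) : Tendsto (intervalIndex q) (𝓝[>] 0) atTop :=
  tendsto_atTop.2 fun m => by
    filter_upwards [Ioo_mem_nhdsGT (hpos m)] with h hh using le_intervalIndex hq hlim hh.1 hh.2.le

end IntervalIndex

theorem exists_antitone_tendsto_zero_forall {u : ℕ → ℝ} (hu_anti : Antitone u)
    (hu_mem : ∀ k, u k ∈ Ioc 0 1) (hu_lim : Tendsto u atTop (𝓝 0)) {p : ℕ → ℝ → Prop}
    (hp : ∀ n, ∀ᶠ k in atTop, p n (u k)) (h0 : p 0 1) :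
    ∃ q : ℕ → ℝ, q 0 = 1 ∧ Antitone q ∧ (∀ n, 0 < q n) ∧ Tendsto q atTop (𝓝 0) ∧
      ∀ n, p n (q n) := by
  obtain ⟨φ, hφ, hpφ⟩ := extraction_forall_of_eventually hp
  refine ⟨fun n => if n = 0 then 1 else u (φ n), if_pos rfl,
    antitone_nat_of_succ_le fun n => ?_, fun n => ?_, ?_, fun n => ?_⟩
  · rw [if_neg n.succ_ne_zero]
    split_ifs
    · exact (hu_mem _).2
    · exact hu_anti (hφ.monotone n.le_succ)
  · dsimp only
    split_ifs
    · exact one_pos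
    · exact (hu_mem _).1
  · refine (hu_lim.comp hφ.tendsto_atTop).congr' ?_
    filter_upwards [eventually_ne_atTop 0] with n hn using (if_neg hn).symm
  · dsimp only
    split_ifs with hn
    · exact hn ▸ h0
    · exact hpφ n

section Probability

variable {Ω : Type*} [MeasurableSpace Ω] {μ : Measure Ω}

/-- The set in `h` need not be measurable, so `h` is only an outer-measure statement; the set of
convergence along the sequence `u` is measurable and contains it. -/
theorem ae_tendsto_comp_of_measure_setOf_tendsto_eq_one [IsProbabilityMeasure μ]
    {ι γ : Type*} [MeasurableSpace γ] {l : Filter ι} {l' : Filter γ} [l'.IsCountablyGenerated]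
    [l'.IsMeasurablyGenerated] {f : ι → Ω → γ} {u : ℕ → ι} (hu : Tendsto u atTop l)
    (hf : ∀ k, Measurable (f (u k))) (h : μ {ω | Tendsto (f · ω) l l'} = 1) :
    ∀ᵐ ω ∂μ, Tendsto (fun k => f (u k) ω) atTop l' := by
  have hsub : {ω | Tendsto (f · ω) l l'} ⊆ {ω | Tendsto (fun k => f (u k) ω) atTop l'} :=
    fun ω hω => Tendsto.comp hω hu
  exact (mem_ae_iff_prob_eq_one (measurableSet_tendsto l' hf)).2
    (le_antisymm prob_le_one (h ▸ measure_mono hsub))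

theorem eventually_measure_lt_le_of_tendsto_ae [IsFiniteMeasure μ] {X : ℕ → Ω → ℝ}
    (hX : ∀ k, Measurable (X k)) (hlim : ∀ᵐ ω ∂μ, Tendsto (X · ω) atTop (𝓝 0))
    {ε : ℝ} (hε : 0 < ε) {δ : ℝ≥0∞} (hδ : 0 < δ) :
    ∀ᶠ k in atTop, μ {ω | ε < X k ω} ≤ δ := by
  have hconv := tendstoInMeasure_iff_dist.1
    (tendstoInMeasure_of_tendsto_ae (g := 0) (fun k => (hX k).aestronglyMeasurable) hlim) ε hε
  filter_upwards [hconv.eventually_lt_const hδ] with k hk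
  refine le_trans (measure_mono fun ω hω => ?_) hk.le
  simpa [Real.dist_eq] using (le_abs_self _).trans' (le_of_lt hω)

theorem ae_bddAbove_range_pow_mul {X : ℕ → Ω → ℝ}
    (hX : ∀ n, μ {ω | ((2 : ℝ) ^ n)⁻¹ < X n ω} ≤ 2⁻¹ ^ n) :
    ∀ᵐ ω ∂μ, BddAbove (range fun n => 2 ^ n * X n ω) := by
  have hsum : ∑' n, μ {ω | ((2 : ℝ) ^ n)⁻¹ < X n ω} ≠ ∞ :=
    ne_top_of_le_ne_top (by simp [ENNReal.tsum_geometric]) (ENNReal.tsum_le_tsum hX)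
  filter_upwards [ae_eventually_notMem hsum] with ω hω
  refine (isBoundedUnder_of_eventually_le (a := 1) (hω.mono fun n hn => ?_)).bddAbove_range
  calc 2 ^ n * X n ω ≤ 2 ^ n * ((2 : ℝ) ^ n)⁻¹ := by gcongr; exact not_lt.1 hn
    _ = 1 := mul_inv_cancel₀ (by positivity)

end Probability

theorem le_toReal_iSup_ofReal {ι : Type*} {f : ι → ℝ} (hf : BddAbove (range f)) (i : ι) :
    f i ≤ (⨆ j, ENNReal.ofReal (f j)).toReal := by
  obtain ⟨C, hC⟩ := hf
  have hne : ⨆ j, ENNReal.ofReal (f j) ≠ ∞ := ne_top_of_le_ne_top ENNReal.ofReal_ne_top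
    (iSup_le fun j => ENNReal.ofReal_le_ofReal (hC (mem_range_self j)))
  exact (ENNReal.ofReal_le_iff_le_toReal hne).1 (le_iSup (fun j => ENNReal.ofReal (f j)) i)

theorem exists_antitone_measure_lt_inv_two_pow_le {Ω : Type*} [MeasurableSpace Ω]
    {μ : Measure Ω} [IsProbabilityMeasure μ] {κ : ℝ → Ω → ℝ}
    (hmeas : ∀ h ∈ Ioc (0 : ℝ) 1, Measurable (κ h))
    (hlim : μ {ω | Tendsto (fun h => κ h ω) (𝓝[>] 0) (𝓝 0)} = 1) :
    ∃ q : ℕ → ℝ, q 0 = 1 ∧ Antitone q ∧ (∀ n, 0 < q n) ∧ Tendsto q atTop (𝓝 0) ∧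
      ∀ n, μ {ω | ((2 : ℝ) ^ n)⁻¹ < κ (q n) ω} ≤ 2⁻¹ ^ n := by
  obtain ⟨u, hu_anti, hu_mem, hu_lim⟩ := exists_seq_strictAnti_tendsto' (zero_lt_one' ℝ)
  have hu_mem' (k : ℕ) : u k ∈ Ioc (0 : ℝ) 1 := Ioo_subset_Ioc_self (hu_mem k)
  have hu : Tendsto u atTop (𝓝[>] 0) :=
    tendsto_nhdsWithin_iff.2 ⟨hu_lim, .of_forall fun k => (hu_mem k).1⟩
  have hmeas_u (k : ℕ) : Measurable (κ (u k)) := hmeas _ (hu_mem' k)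
  have hae := ae_tendsto_comp_of_measure_setOf_tendsto_eq_one hu hmeas_u hlim
  refine exists_antitone_tendsto_zero_forall hu_anti.antitone hu_mem' hu_lim
    (p := fun n h => μ {ω | ((2 : ℝ) ^ n)⁻¹ < κ h ω} ≤ 2⁻¹ ^ n)
    (fun n => eventually_measure_lt_le_of_tendsto_ae hmeas_u hae (by positivity)
      (ENNReal.pow_pos (ENNReal.inv_pos.2 ENNReal.ofNat_ne_top) n)) ?_
  simpa using prob_le_one

theorem module_of_continuity_factorization_general
    {Ω : Type*} [MeasurableSpace Ω] (P : Measure Ω) [IsProbabilityMeasure P]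
    (κ : ℝ → Ω → ℝ)
    (hmeas : ∀ h ∈ Ioc (0 : ℝ) 1, Measurable (κ h))
    (hmono : ∀ ω, ∀ h₁ ∈ Ioc (0 : ℝ) 1, ∀ h₂ ∈ Ioc (0 : ℝ) 1,
      h₁ ≤ h₂ → κ h₁ ω ≤ κ h₂ ω)
    (hlim : P {ω | Tendsto (fun h => κ h ω) (𝓝[>] (0 : ℝ)) (𝓝 0)} = 1) :
    ∃ (Θ : Ω → ℝ) (ω₀ : ℝ → ℝ), Measurable Θ ∧ (∀ ω, 0 ≤ Θ ω) ∧
      (∀ h ∈ Ioc (0 : ℝ) 1, 0 < ω₀ h) ∧ MonotoneOn ω₀ (Ioc (0 : ℝ) 1) ∧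
      Tendsto ω₀ (𝓝[>] (0 : ℝ)) (𝓝 0) ∧
      ∀ᵐ ω ∂P, ∀ h ∈ Ioc (0 : ℝ) 1, κ h ω ≤ Θ ω * ω₀ h := by
  obtain ⟨q, hq0, hq_anti, hq_pos, hq_lim, hq_prob⟩ :=
    exists_antitone_measure_lt_inv_two_pow_le hmeas hlim
  have hq_mem (n : ℕ) : q n ∈ Ioc (0 : ℝ) 1 := ⟨hq_pos n, hq0 ▸ hq_anti n.zero_le⟩
  set Θ : Ω → ℝ := fun ω => (⨆ n, ENNReal.ofReal (2 ^ n * κ (q n) ω)).toReal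
  refine ⟨Θ, fun h => ((2 : ℝ) ^ intervalIndex q h)⁻¹,
    (Measurable.iSup fun n => ((hmeas _ (hq_mem n)).const_mul _).ennreal_ofReal).ennreal_toReal,
    fun ω => ENNReal.toReal_nonneg, fun h _ => by positivity, ?_, ?_, ?_⟩
  · intro h₁ hh₁ h₂ _ h₁₂
    exact inv_anti₀ (by positivity)
      (pow_le_pow_right₀ one_le_two (intervalIndex_le_of_le hq_lim hh₁.1 h₁₂))
  · exact tendsto_inv_atTop_zero.comp ((tendsto_pow_atTop_atTop_of_one_lt one_lt_two).comp
      (tendsto_intervalIndex hq_anti hq_lim hq_pos))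
  · filter_upwards [ae_bddAbove_range_pow_mul hq_prob] with ω hω h hh
    set N := intervalIndex q h
    have hκ : κ h ω ≤ κ (q N) ω :=
      hmono ω h hh (q N) (hq_mem N) (le_apply_intervalIndex (hq0 ▸ hh.2))
    have hΘ : 2 ^ N * κ (q N) ω ≤ Θ ω := le_toReal_iSup_ofReal hω N
    rw [le_mul_inv_iff₀ (by positivity)]
    calc κ h ω * 2 ^ N ≤ κ (q N) ω * 2 ^ N := by gcongr
      _ ≤ Θ ω := by rwa [mul_comm]

/-- Factorization of a monotone family of nonnegative random variables tending
to zero a.s.: `κ(h,·) ≤ Θ·ω₀(h)` with an a.s. finite random variable `Θ` and a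
deterministic module of continuity `ω₀`. -/
theorem module_of_continuity_factorization
    {Ω : Type*} [MeasurableSpace Ω] (P : Measure Ω) [IsProbabilityMeasure P]
    (κ : ℝ → Ω → ℝ)
    (hmeas : ∀ h ∈ Ioc (0 : ℝ) 1, Measurable (κ h))
    (hnonneg : ∀ h ∈ Ioc (0 : ℝ) 1, ∀ ω, 0 ≤ κ h ω)
    (hmono : ∀ ω, ∀ h₁ ∈ Ioc (0 : ℝ) 1, ∀ h₂ ∈ Ioc (0 : ℝ) 1,
      h₁ ≤ h₂ → κ h₁ ω ≤ κ h₂ ω)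
    (hlim : P {ω | Tendsto (fun h => κ h ω) (𝓝[>] (0 : ℝ)) (𝓝 0)} = 1) :
    ∃ (Θ : Ω → ℝ) (ω₀ : ℝ → ℝ), Measurable Θ ∧ (∀ ω, 0 ≤ Θ ω) ∧
      (∀ h ∈ Ioc (0 : ℝ) 1, 0 < ω₀ h) ∧ MonotoneOn ω₀ (Ioc (0 : ℝ) 1) ∧
      Tendsto ω₀ (𝓝[>] (0 : ℝ)) (𝓝 0) ∧
      ∀ᵐ ω ∂P, ∀ h ∈ Ioc (0 : ℝ) 1, κ h ω ≤ Θ ω * ω₀ h :=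
  module_of_continuity_factorization_general P κ hmeas hmono hlim
end

section
/- There is an absolute constant C ∈ (0,∞) with the following property. Let (Ω, 𝓕, P) be a probability space, k ≥ 1, and for each j = 1,…,k let (ξ_i^{(j)})_{i ≥ 1} be a sequence of independent, identically distributed, centered (mean-zero) real random variables; write ξ^{(j)} := ξ_1^{(j)} and S_n(j) := n^{−1/2} Σ_{i=1}^n ξ_i^{(j)}. Let p_1,…,p_k ≥ 2 and a_1,…,a_k > 1 with Σ_{j=1}^k 1/a_j = 1, and assume E|ξ^{(j)}|^{a_j p_j} < ∞ for each j. Then for every n ≥ 1 and every u > 0, P( min_{1 ≤ j ≤ k} |S_n(j)| > u ) ≤ u^{−Σ_{j=1}^k p_j} · ∏_{j=1}^k [ C · (a_j p_j / ln(a_j p_j)) · ( E|ξ^{(j)}|^{a_j p_j} )^{1/(a_j p_j)} ]^{p_j}. -/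
open MeasureTheory ProbabilityTheory Set Filter
open scoped ENNReal

/-!
Markov's inequality at the exponent `x = a_j p_j` and the Rosenthal-type moment bound
`E|S_n|^x ≤ (9x)^(x/2) E|ξ|^x` (`x ≥ 2`) bound each `P(|S_n(j)| > u)`. The event
`min_j |S_n(j)| > u` lies in all of these events, so as `∑ 1/a_j = 1` its probability is at most
`∏_j P(|S_n(j)| > u)^(1/a_j)`; finally `(9x)^(1/2) ≤ 6 x / log x`.

The moment bound goes by induction on `x` in steps of `2`. With `ψ(t) = sign t · |t|^(x-1)` and
`T = ∑_{i ∈ s} ξ_i`, centring and independence give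
`E|T|^x = ∑_i E[ξ_i ψ(T)] = ∑_i E[ξ_i (ψ(T) - ψ(T - ξ_i))]`, and the mean value theorem bounds each
term by `(x-1) (3 E|T - ξ_i|^(x-2) Eξ² + x^(x-2) E|ξ|^x)`. The moment of order `x - 2` is controlled
by the induction hypothesis when `x ≥ 4` and by the variance otherwise; when `|s| < x` the crude
bound `|s|^x E|ξ|^x` suffices.
-/

/-- `sgnRpow p t = sign t * |t| ^ p`. -/
noncomputable def sgnRpow (p t : ℝ) : ℝ := t * |t| ^ (p - 1)

lemma mul_sgnRpow {p : ℝ} (hp : 0 ≤ p) (t : ℝ) : t * sgnRpow p t = |t| ^ (p + 1) := by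
  rcases eq_or_ne t 0 with rfl | ht
  · simp [sgnRpow, Real.zero_rpow (by linarith : p + 1 ≠ 0)]
  · rw [sgnRpow, ← mul_assoc, show p + 1 = 2 + (p - 1) by ring,
      Real.rpow_add (abs_pos.mpr ht), Real.rpow_two, sq_abs, sq]

lemma abs_sgnRpow {p : ℝ} (hp : 0 < p) (t : ℝ) : |sgnRpow p t| = |t| ^ p := by
  rw [sgnRpow, abs_mul, Real.abs_rpow_of_nonneg (abs_nonneg t), abs_abs,
    ← Real.rpow_one_add' (abs_nonneg t) (by linarith)]
  ring_nf

@[fun_prop]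
lemma measurable_sgnRpow (p : ℝ) : Measurable (sgnRpow p) := by
  unfold sgnRpow; fun_prop

lemma continuous_sgnRpow {p : ℝ} (hp : 1 ≤ p) : Continuous (sgnRpow p) :=
  continuous_id.mul (continuous_abs.rpow_const fun _ => Or.inr (by linarith))

lemma hasDerivAt_sgnRpow {p : ℝ} (hp : 1 ≤ p) (t : ℝ) :
    HasDerivAt (sgnRpow p) (p * |t| ^ (p - 1)) t := by
  refine hasDerivAt_of_hasDerivAt_of_ne' (x := 0) (g := fun s => p * |s| ^ (p - 1))
    (fun s hs => ?_) (continuous_sgnRpow hp).continuousAt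
    (by fun_prop (disch := exact Or.inr (by linarith))) t
  have hs' : 0 < |s| := abs_pos.mpr hs
  have hsign : (SignType.sign s : ℝ) * s = |s| := by
    rcases hs.lt_or_gt with h | h <;> simp [h, abs_of_neg, abs_of_pos]
  refine ((hasDerivAt_id' s).mul ((hasDerivAt_abs hs).rpow_const (Or.inl hs'.ne'))).congr_deriv ?_
  have hpow : |s| * |s| ^ (p - 1 - 1) = |s| ^ (p - 1) := by
    rw [mul_comm, ← Real.rpow_add_one hs'.ne']; ring_nf
  calc 1 * |s| ^ (p - 1) + s * ((SignType.sign s : ℝ) * (p - 1) * |s| ^ (p - 1 - 1))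
      = |s| ^ (p - 1) + (p - 1) * ((SignType.sign s : ℝ) * s * |s| ^ (p - 1 - 1)) := by ring
    _ = p * |s| ^ (p - 1) := by rw [hsign, hpow]; ring

lemma abs_sgnRpow_add_sub_le {p : ℝ} (hp : 1 ≤ p) (a b : ℝ) :
    |sgnRpow p (a + b) - sgnRpow p a| ≤ p * (|a| + |b|) ^ (p - 1) * |b| := by
  have hderiv_le : ∀ t ∈ uIcc a (a + b), ‖p * |t| ^ (p - 1)‖ ≤ p * (|a| + |b|) ^ (p - 1) := by
    intro t ht
    have ht' : |t| ≤ |a| + |b| := by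
      rcases mem_uIcc.mp ht with ⟨h1, h2⟩ | ⟨h1, h2⟩ <;>
        exact abs_le.mpr ⟨by linarith [neg_abs_le a, neg_abs_le b, abs_nonneg b], by
          linarith [le_abs_self a, le_abs_self b, abs_nonneg b]⟩
    rw [Real.norm_eq_abs, abs_of_nonneg (by positivity)]
    gcongr
  simpa [Real.norm_eq_abs] using Convex.norm_image_sub_le_of_norm_hasDerivWithin_le
    (fun t _ => (hasDerivAt_sgnRpow hp t).hasDerivWithinAt) hderiv_le (convex_uIcc a (a + b))
    left_mem_uIcc right_mem_uIcc

lemma add_rpow_le_split {u v q δ : ℝ} (hu : 0 ≤ u) (hv : 0 ≤ v) (hq : 0 ≤ q) (hδ : 0 < δ) :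
    (u + v) ^ q ≤ (1 + δ) ^ q * u ^ q + (1 + δ⁻¹) ^ q * v ^ q := by
  rcases le_or_gt v (δ * u) with h | h
  · calc (u + v) ^ q ≤ ((1 + δ) * u) ^ q := by gcongr; linarith
      _ = (1 + δ) ^ q * u ^ q := Real.mul_rpow (by positivity) hu
      _ ≤ _ := le_add_of_nonneg_right (by positivity)
  · have hu' : u ≤ δ⁻¹ * v := by rw [inv_mul_eq_div, le_div_iff₀ hδ]; linarith
    calc (u + v) ^ q ≤ ((1 + δ⁻¹) * v) ^ q := by gcongr; linarith
      _ = (1 + δ⁻¹) ^ q * v ^ q := Real.mul_rpow (by positivity) hv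
      _ ≤ _ := le_add_of_nonneg_left (by positivity)

lemma one_add_inv_rpow_sub_one_le_three {p : ℝ} (hp : 1 ≤ p) : (1 + p⁻¹) ^ (p - 1) ≤ 3 :=
  calc (1 + p⁻¹) ^ (p - 1) ≤ Real.exp p⁻¹ ^ (p - 1) :=
        Real.rpow_le_rpow (by positivity) (by linarith [Real.add_one_le_exp p⁻¹]) (by linarith)
    _ = Real.exp (p⁻¹ * (p - 1)) := (Real.exp_mul _ _).symm
    _ ≤ Real.exp 1 := by
        gcongr
        rw [inv_mul_le_iff₀ (by linarith)]
        linarith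
    _ ≤ 3 := by linarith [Real.exp_one_lt_d9]

lemma mul_sgnRpow_add_sub_le {p : ℝ} (hp : 1 ≤ p) (a b : ℝ) :
    b * (sgnRpow p (a + b) - sgnRpow p a) ≤
      p * (3 * (|a| ^ (p - 1) * b ^ 2) + (1 + p) ^ (p - 1) * |b| ^ (p + 1)) := by
  have hsplit := add_rpow_le_split (abs_nonneg a) (abs_nonneg b) (by linarith : 0 ≤ p - 1)
    (inv_pos.mpr (by linarith : 0 < p))
  rw [inv_inv] at hsplit
  have hb : |b| ^ (p - 1) * b ^ 2 = |b| ^ (p + 1) := by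
    rw [← sq_abs, ← Real.rpow_natCast, ← Real.rpow_add' (abs_nonneg b) (by norm_num; linarith)]
    norm_num; ring_nf
  calc b * (sgnRpow p (a + b) - sgnRpow p a)
      ≤ |b| * |sgnRpow p (a + b) - sgnRpow p a| := by rw [← abs_mul]; exact le_abs_self _
    _ ≤ |b| * (p * (|a| + |b|) ^ (p - 1) * |b|) := by
        gcongr; exact abs_sgnRpow_add_sub_le hp a b
    _ = p * (|a| + |b|) ^ (p - 1) * b ^ 2 := by rw [← sq_abs b]; ring
    _ ≤ p * ((1 + p⁻¹) ^ (p - 1) * |a| ^ (p - 1) + (1 + p) ^ (p - 1) * |b| ^ (p - 1)) * b ^ 2 := by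
        gcongr
    _ = p * ((1 + p⁻¹) ^ (p - 1) * |a| ^ (p - 1) * b ^ 2 + (1 + p) ^ (p - 1) * |b| ^ (p + 1)) := by
        rw [← hb]; ring
    _ ≤ p * (3 * (|a| ^ (p - 1) * b ^ 2) + (1 + p) ^ (p - 1) * |b| ^ (p + 1)) := by
        rw [← mul_assoc]; gcongr; exact one_add_inv_rpow_sub_one_le_three hp

lemma mul_rpow_sub_one_le_rpow_add_rpow {a c x : ℝ} (ha : 0 ≤ a) (hc : 0 ≤ c) (hx : 1 ≤ x) :
    a * c ^ (x - 1) ≤ a ^ x + c ^ x := by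
  have hM : 0 ≤ max a c := le_max_of_le_left ha
  calc a * c ^ (x - 1) ≤ max a c * max a c ^ (x - 1) :=
        mul_le_mul (le_max_left a c) (Real.rpow_le_rpow hc (le_max_right a c) (by linarith))
          (by positivity) hM
    _ = max a c ^ x := by rw [← Real.rpow_one_add' hM (by linarith)]; ring_nf
    _ ≤ a ^ x + c ^ x := by
        rcases max_choice a c with h | h <;> rw [h] <;>
          linarith [Real.rpow_nonneg ha x, Real.rpow_nonneg hc x]

lemma abs_sum_rpow_le_card_rpow_mul_sum {ι : Type*} (s : Finset ι) (f : ι → ℝ) {x : ℝ}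
    (hx : 1 ≤ x) : |∑ i ∈ s, f i| ^ x ≤ (s.card : ℝ) ^ (x - 1) * ∑ i ∈ s, |f i| ^ x :=
  (Real.rpow_le_rpow (abs_nonneg _) (Finset.abs_sum_le_sum_abs f s) (by linarith)).trans
    (Real.rpow_sum_le_const_mul_sum_rpow s f hx)

lemma mul_rpow_sub_two_le {n x : ℝ} (hx : 2 ≤ x) (hxn : x ≤ n) :
    n * ((x - 1) * x ^ (x - 2)) ≤ (2 / 3) * ((9 * x) ^ (x / 2) * n ^ (x / 2)) := by
  have hx0 : 0 < x := by linarith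
  have hn : 0 < n := by linarith
  have h9 : (9 : ℝ) ≤ 9 ^ (x / 2) := by
    simpa using Real.rpow_le_rpow_of_exponent_le (by norm_num : (1 : ℝ) ≤ 9)
      (by linarith : 1 ≤ x / 2)
  calc n * ((x - 1) * x ^ (x - 2)) ≤ n * (x * x ^ (x - 2)) := by gcongr; linarith
    _ = x ^ (x / 2) * (n * x ^ (x / 2 - 1)) := by
        have : x * x ^ (x - 2) = x ^ (x / 2) * x ^ (x / 2 - 1) := by
          rw [← Real.rpow_one_add' hx0.le (by linarith), ← Real.rpow_add hx0]; ring_nf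
        rw [this]; ring
    _ ≤ x ^ (x / 2) * (n * n ^ (x / 2 - 1)) := by gcongr; linarith
    _ = x ^ (x / 2) * n ^ (x / 2) := by
        rw [mul_comm n, ← Real.rpow_add_one hn.ne']; ring_nf
    _ ≤ (2 / 3) * ((9 * x) ^ (x / 2) * n ^ (x / 2)) := by
        rw [Real.mul_rpow (by norm_num) hx0.le]
        nlinarith [Real.rpow_nonneg hx0.le (x / 2), Real.rpow_nonneg hn.le (x / 2),
          mul_nonneg (Real.rpow_nonneg hx0.le (x / 2)) (Real.rpow_nonneg hn.le (x / 2))]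

lemma rosenthal_step_le {n x m v D : ℝ} (hx : 2 ≤ x) (hxn : x ≤ n) (hm : 0 ≤ m) (hv : 0 ≤ v)
    (hvm : v ≤ m ^ (2 / x))
    (hD : D ≤ (9 * x) ^ ((x - 2) / 2) * n ^ ((x - 2) / 2) * m ^ ((x - 2) / x)) :
    n * ((x - 1) * (3 * D * v + x ^ (x - 2) * m)) ≤ (9 * x) ^ (x / 2) * n ^ (x / 2) * m := by
  have hn : 0 < n := by linarith
  set A := (9 * x) ^ ((x - 2) / 2)
  set B := n ^ ((x - 2) / 2)
  have hA : A * (9 * x) = (9 * x) ^ (x / 2) := by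
    rw [← Real.rpow_add_one (by positivity)]; ring_nf
  have hB : n * B = n ^ (x / 2) := by
    rw [mul_comm, ← Real.rpow_add_one hn.ne']; ring_nf
  have hDv : D * v ≤ A * B * m := by
    calc D * v ≤ A * B * m ^ ((x - 2) / x) * m ^ (2 / x) := by gcongr
      _ = A * B * m := by
        have hsum : (x - 2) / x + 2 / x = 1 := by field_simp; ring
        rw [mul_assoc, ← Real.rpow_add' hm (by rw [hsum]; norm_num), hsum, Real.rpow_one]
  have hterm1 : n * ((x - 1) * (3 * D * v)) ≤ (1 / 3) * ((9 * x) ^ (x / 2) * n ^ (x / 2) * m) := by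
    rw [← hA, ← hB]
    have : 0 ≤ A * (n * B) * m := by positivity
    calc n * ((x - 1) * (3 * D * v)) = 3 * (x - 1) * (n * (D * v)) := by ring
      _ ≤ 3 * (x - 1) * (n * (A * B * m)) := by gcongr; linarith
      _ ≤ 3 * x * (n * (A * B * m)) := by gcongr; linarith
      _ = (1 / 3) * (A * (9 * x) * (n * B) * m) := by ring
  have hterm2 := mul_le_mul_of_nonneg_right (mul_rpow_sub_two_le hx hxn) hm
  linarith [show n * ((x - 1) * (3 * D * v + x ^ (x - 2) * m)) =
    n * ((x - 1) * (3 * D * v)) + n * ((x - 1) * x ^ (x - 2)) * m by ring]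

lemma sqrt_nine_mul_le {x : ℝ} (hx : 1 < x) : (9 * x) ^ (1 / 2 : ℝ) ≤ 6 * (x / Real.log x) := by
  have hx0 : 0 < x := by linarith
  have hlog : Real.log x ≤ 2 * x ^ (1 / 2 : ℝ) := by
    have := Real.log_le_rpow_div hx0.le (by norm_num : (0 : ℝ) < 1 / 2)
    linarith [show x ^ (1 / 2 : ℝ) / (1 / 2) = 2 * x ^ (1 / 2 : ℝ) by ring]
  have hsq : x ^ (1 / 2 : ℝ) * x ^ (1 / 2 : ℝ) = x := by
    rw [← Real.rpow_add hx0]; norm_num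
  have h9 : (9 : ℝ) ^ (1 / 2 : ℝ) = 3 := by
    rw [show (9 : ℝ) = 3 ^ (2 : ℝ) by norm_num, ← Real.rpow_mul (by norm_num)]; norm_num
  rw [Real.mul_rpow (by norm_num) hx0.le, h9, mul_div_assoc', le_div_iff₀ (Real.log_pos hx)]
  nlinarith [Real.rpow_nonneg hx0.le (1 / 2 : ℝ)]

lemma moment_tail_rpow_le {M m u a p : ℝ} (hM : 0 ≤ M) (hm : 0 ≤ m) (hu : 0 < u) (ha : 0 < a)
    (hp : 0 < p) (hap : 1 < a * p) (hMm : M ≤ (9 * (a * p)) ^ (a * p / 2) * m) :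
    (M / u ^ (a * p)) ^ (1 / a) ≤
      u ^ (-p) * (6 * (a * p / Real.log (a * p)) * m ^ (1 / (a * p))) ^ p := by
  have hx0 : 0 < a * p := by positivity
  have hsplit : ∀ K : ℝ, 0 ≤ K → (K ^ (a * p / 2) * m / u ^ (a * p)) ^ (1 / a) =
      u ^ (-p) * (K ^ (1 / 2 : ℝ) * m ^ (1 / (a * p))) ^ p := fun K hK => by
    rw [Real.div_rpow (by positivity) (by positivity), Real.mul_rpow (by positivity) hm,
      Real.mul_rpow (by positivity) (by positivity), ← Real.rpow_mul hK, ← Real.rpow_mul hK,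
      ← Real.rpow_mul hm, ← Real.rpow_mul hu.le, Real.rpow_neg hu.le]
    field_simp
  calc (M / u ^ (a * p)) ^ (1 / a) ≤ ((9 * (a * p)) ^ (a * p / 2) * m / u ^ (a * p)) ^ (1 / a) := by
        gcongr
    _ = u ^ (-p) * ((9 * (a * p)) ^ (1 / 2 : ℝ) * m ^ (1 / (a * p))) ^ p :=
        hsplit _ (by positivity)
    _ ≤ u ^ (-p) * (6 * (a * p / Real.log (a * p)) * m ^ (1 / (a * p))) ^ p := by
        gcongr
        exact sqrt_nine_mul_le hap

section Moments

variable {Ω : Type*} [MeasurableSpace Ω] {P : Measure Ω} {Z : Ω → ℝ} {r s : ℝ}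

lemma integrable_abs_rpow_of_le [IsFiniteMeasure P] (hZ : AEStronglyMeasurable Z P)
    (hr : 0 ≤ r) (hrs : r ≤ s) (hint : Integrable (fun ω => |Z ω| ^ s) P) :
    Integrable (fun ω => |Z ω| ^ r) P := by
  refine ((integrable_const 1).add hint).mono' (by fun_prop) (ae_of_all _ fun ω => ?_)
  rw [Real.norm_eq_abs, abs_of_nonneg (by positivity), Pi.add_apply]
  rcases le_total |Z ω| 1 with h | h
  · linarith [Real.rpow_le_one (abs_nonneg _) h hr, Real.rpow_nonneg (abs_nonneg (Z ω)) s]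
  · linarith [Real.rpow_le_rpow_of_exponent_le h hrs]

lemma integral_abs_rpow_le [IsProbabilityMeasure P] (hZ : AEStronglyMeasurable Z P)
    (hr : 0 ≤ r) (hrs : r ≤ s) (hint : Integrable (fun ω => |Z ω| ^ s) P) :
    ∫ ω, |Z ω| ^ r ∂P ≤ (∫ ω, |Z ω| ^ s ∂P) ^ (r / s) := by
  rcases hr.eq_or_lt with rfl | hr'
  · simp
  have hs : 0 < s := hr'.trans_le hrs
  have hpow : ∀ ω, (|Z ω| ^ s) ^ (r / s) = |Z ω| ^ r := fun ω => by
    rw [← Real.rpow_mul (abs_nonneg _), mul_div_cancel₀ _ hs.ne']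
  have := (Real.concaveOn_rpow (div_nonneg hr hs.le) ((div_le_one hs).mpr hrs)).le_map_integral
    (continuousOn_id.rpow_const fun _ _ => Or.inr (div_nonneg hr hs.le)) isClosed_Ici
    (ae_of_all _ fun ω => Real.rpow_nonneg (abs_nonneg (Z ω)) s) hint
    (by simpa [Function.comp_def, hpow] using integrable_abs_rpow_of_le hZ hr hrs hint)
  simpa [hpow] using this

lemma measureReal_lt_abs_le [IsFiniteMeasure P] (hs : 0 < s) {u : ℝ} (hu : 0 < u)
    (hint : Integrable (fun ω => |Z ω| ^ s) P) :
    P.real {ω | u < |Z ω|} ≤ (∫ ω, |Z ω| ^ s ∂P) / u ^ s := by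
  have hus : 0 < u ^ s := Real.rpow_pos_of_pos hu s
  rw [le_div_iff₀ hus, mul_comm]
  refine le_trans ?_ (mul_meas_ge_le_integral_of_nonneg (ae_of_all _ fun ω => by positivity) hint
    (u ^ s))
  exact mul_le_mul_of_nonneg_left
    (measureReal_mono fun ω (hω : u < |Z ω|) => Real.rpow_le_rpow hu.le hω.le hs.le) hus.le

lemma integrable_mul_sgnRpow {f g : Ω → ℝ} {x : ℝ} (hf : AEStronglyMeasurable f P)
    (hg : AEStronglyMeasurable g P) (hx : 1 < x) (hfx : Integrable (fun ω => |f ω| ^ x) P)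
    (hgx : Integrable (fun ω => |g ω| ^ x) P) :
    Integrable (fun ω => f ω * sgnRpow (x - 1) (g ω)) P := by
  refine (hfx.add hgx).mono'
    (hf.mul ((measurable_sgnRpow _).comp_aemeasurable hg.aemeasurable).aestronglyMeasurable)
    (ae_of_all _ fun ω => ?_)
  rw [Real.norm_eq_abs, abs_mul, abs_sgnRpow (by linarith)]
  exact mul_rpow_sub_one_le_rpow_add_rpow (abs_nonneg _) (abs_nonneg _) hx.le

end Moments

lemma measureReal_iInter_le_prod_rpow {Ω ι : Type*} [MeasurableSpace Ω] [Fintype ι]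
    {P : Measure Ω} [IsFiniteMeasure P] (A : ι → Set Ω) {c : ι → ℝ} (hc : ∀ i, 0 ≤ c i)
    (hsum : ∑ i, c i = 1) :
    P.real (⋂ i, A i) ≤ ∏ i, P.real (A i) ^ c i := by
  calc P.real (⋂ i, A i) = P.real (⋂ i, A i) ^ ∑ i, c i := by rw [hsum, Real.rpow_one]
    _ = ∏ i, P.real (⋂ i, A i) ^ c i :=
        Real.rpow_sum_of_nonneg measureReal_nonneg fun i _ => hc i
    _ ≤ ∏ i, P.real (A i) ^ c i :=
        Finset.prod_le_prod (fun i _ => by positivity) fun i _ =>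
          Real.rpow_le_rpow measureReal_nonneg (measureReal_mono (iInter_subset A i)) (hc i)

structure IsIIDCentered {Ω : Type*} [MeasurableSpace Ω] (ξ : ℕ → Ω → ℝ) (P : Measure Ω) :
    Prop where
  measurable : ∀ i, Measurable (ξ i)
  iIndepFun : iIndepFun ξ P
  identDistrib : ∀ i, IdentDistrib (ξ i) (ξ 0) P P
  integral_eq_zero : ∀ i, ∫ ω, ξ i ω ∂P = 0

noncomputable def normalizedSum {Ω : Type*} (ξ : ℕ → Ω → ℝ) (n : ℕ) (ω : Ω) : ℝ :=
  (n : ℝ) ^ (-(1 / 2 : ℝ)) * ∑ i ∈ Finset.range n, ξ i ω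

namespace IsIIDCentered

variable {Ω : Type*} [MeasurableSpace Ω] {P : Measure Ω} {ξ : ℕ → Ω → ℝ} {x r : ℝ}

lemma integral_comp_eq (h : IsIIDCentered ξ P) {f : ℝ → ℝ} (hf : Measurable f) (i : ℕ) :
    ∫ ω, f (ξ i ω) ∂P = ∫ ω, f (ξ 0 ω) ∂P :=
  ((h.identDistrib i).comp hf).integral_eq

lemma indepFun_sum_erase (h : IsIIDCentered ξ P) (s : Finset ℕ) (i : ℕ) :
    IndepFun (fun ω => ∑ l ∈ s.erase i, ξ l ω) (ξ i) P := by
  simpa [← Finset.sum_apply] using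
    h.iIndepFun.indepFun_finsetSum_of_notMem h.measurable (Finset.notMem_erase i s)

lemma integral_mul_sgnRpow_sum_erase (h : IsIIDCentered ξ P) (p : ℝ) (s : Finset ℕ) (i : ℕ) :
    ∫ ω, ξ i ω * sgnRpow p (∑ l ∈ s.erase i, ξ l ω) ∂P = 0 := by
  rw [(h.indepFun_sum_erase s i).symm.integral_fun_comp_mul_comp (f := fun t => t)
    (g := sgnRpow p) (h.measurable i).aemeasurable
    ((s.erase i).measurable_sum fun l _ => h.measurable l).aemeasurable (by fun_prop)
    (measurable_sgnRpow p).aestronglyMeasurable]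
  simp [h.integral_eq_zero]

lemma integral_abs_sum_erase_rpow_mul_sq (h : IsIIDCentered ξ P) (q : ℝ) (s : Finset ℕ)
    (i : ℕ) :
    ∫ ω, |∑ l ∈ s.erase i, ξ l ω| ^ q * ξ i ω ^ 2 ∂P =
      (∫ ω, |∑ l ∈ s.erase i, ξ l ω| ^ q ∂P) * ∫ ω, ξ 0 ω ^ 2 ∂P := by
  rw [(h.indepFun_sum_erase s i).integral_fun_comp_mul_comp (f := fun t => |t| ^ q)
    (g := fun t => t ^ 2) ((s.erase i).measurable_sum fun l _ => h.measurable l).aemeasurable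
    (h.measurable i).aemeasurable
    (by fun_prop : Measurable fun t : ℝ => |t| ^ q).aestronglyMeasurable (by fun_prop),
    h.integral_comp_eq (f := fun t => t ^ 2) (by fun_prop)]

variable [IsProbabilityMeasure P]

lemma integrable_abs_rpow (h : IsIIDCentered ξ P) (hint : Integrable (fun ω => |ξ 0 ω| ^ x) P)
    (hr : 0 ≤ r) (hrx : r ≤ x) (i : ℕ) : Integrable (fun ω => |ξ i ω| ^ r) P :=
  integrable_abs_rpow_of_le (h.measurable i).aestronglyMeasurable hr hrx
    (((h.identDistrib i).comp (by fun_prop : Measurable fun t : ℝ => |t| ^ x)).integrable_iff.mpr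
      hint)

lemma integrable_abs_sum_rpow (h : IsIIDCentered ξ P) (hx : 1 ≤ x)
    (hint : Integrable (fun ω => |ξ 0 ω| ^ x) P) (hr : 0 ≤ r) (hrx : r ≤ x) (t : Finset ℕ) :
    Integrable (fun ω => |∑ i ∈ t, ξ i ω| ^ r) P := by
  have hmeas : Measurable fun ω => ∑ i ∈ t, ξ i ω := t.measurable_sum fun i _ => h.measurable i
  have hbound : Integrable (fun ω => (t.card : ℝ) ^ (x - 1) * ∑ i ∈ t, |ξ i ω| ^ x) P :=
    (integrable_finsetSum t fun i _ =>
      h.integrable_abs_rpow hint (by linarith) le_rfl i).const_mul _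
  refine integrable_abs_rpow_of_le hmeas.aestronglyMeasurable hr hrx
    (hbound.mono' (hmeas.abs.pow_const x).aestronglyMeasurable (ae_of_all _ fun ω => ?_))
  rw [Real.norm_eq_abs, abs_of_nonneg (by positivity)]
  exact abs_sum_rpow_le_card_rpow_mul_sum t _ hx

lemma integral_abs_sum_rpow_le_card (h : IsIIDCentered ξ P) (hx : 1 ≤ x)
    (hint : Integrable (fun ω => |ξ 0 ω| ^ x) P) (t : Finset ℕ) :
    ∫ ω, |∑ i ∈ t, ξ i ω| ^ x ∂P ≤ (t.card : ℝ) ^ x * ∫ ω, |ξ 0 ω| ^ x ∂P := by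
  have hint_i := fun i => h.integrable_abs_rpow hint (by linarith) le_rfl i
  calc ∫ ω, |∑ i ∈ t, ξ i ω| ^ x ∂P
      ≤ ∫ ω, (t.card : ℝ) ^ (x - 1) * ∑ i ∈ t, |ξ i ω| ^ x ∂P :=
        integral_mono (h.integrable_abs_sum_rpow hx hint (by linarith) le_rfl t)
          ((integrable_finsetSum t fun i _ => hint_i i).const_mul _)
          fun ω => abs_sum_rpow_le_card_rpow_mul_sum t _ hx
    _ = (t.card : ℝ) ^ x * ∫ ω, |ξ 0 ω| ^ x ∂P := by
        rw [integral_const_mul, integral_finsetSum t fun i _ => hint_i i]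
        simp only [h.integral_comp_eq (f := fun t => |t| ^ x) (by fun_prop), Finset.sum_const,
          nsmul_eq_mul]
        rcases t.eq_empty_or_nonempty with rfl | ht
        · simp [Real.zero_rpow (by linarith : x ≠ 0)]
        · rw [← mul_assoc, ← Real.rpow_add_one (by simp [ht.ne_empty])]
          ring_nf

lemma integral_sq_le (h : IsIIDCentered ξ P) (hx : 2 ≤ x)
    (hint : Integrable (fun ω => |ξ 0 ω| ^ x) P) :
    ∫ ω, ξ 0 ω ^ 2 ∂P ≤ (∫ ω, |ξ 0 ω| ^ x ∂P) ^ (2 / x) := by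
  simpa [Real.rpow_two, sq_abs] using
    integral_abs_rpow_le (h.measurable 0).aestronglyMeasurable zero_le_two hx hint

lemma integral_sum_sq (h : IsIIDCentered ξ P) (hx : 2 ≤ x)
    (hint : Integrable (fun ω => |ξ 0 ω| ^ x) P) (t : Finset ℕ) :
    ∫ ω, (∑ i ∈ t, ξ i ω) ^ 2 ∂P = t.card * ∫ ω, ξ 0 ω ^ 2 ∂P := by
  have hL2 : ∀ i, MemLp (ξ i) 2 P := fun i =>
    (memLp_two_iff_integrable_sq (h.measurable i).aestronglyMeasurable).mpr <| by
      simpa [Real.rpow_two, sq_abs] using h.integrable_abs_rpow hint zero_le_two hx i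
  have hvar := IndepFun.variance_sum (s := t) (fun i _ => hL2 i)
    fun i _ j _ hij => h.iIndepFun.indepFun hij
  have hmean : ∫ ω, (∑ i ∈ t, ξ i) ω ∂P = 0 := by
    simp [integral_finsetSum t fun i _ => (hL2 i).integrable one_le_two, h.integral_eq_zero]
  rw [variance_of_integral_eq_zero
    (t.aemeasurable_sum fun i _ => (h.measurable i).aemeasurable) hmean] at hvar
  simp only [variance_of_integral_eq_zero (h.measurable _).aemeasurable (h.integral_eq_zero _),
    h.integral_comp_eq (f := fun t => t ^ 2) (by fun_prop), Finset.sum_const, nsmul_eq_mul,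
    Finset.sum_apply] at hvar
  exact hvar

lemma integral_abs_sum_rpow_le_of_le_two (h : IsIIDCentered ξ P) (hx : 2 ≤ x)
    (hint : Integrable (fun ω => |ξ 0 ω| ^ x) P) (hr : 0 ≤ r) (hr2 : r ≤ 2) (t : Finset ℕ) :
    ∫ ω, |∑ i ∈ t, ξ i ω| ^ r ∂P ≤ (t.card : ℝ) ^ (r / 2) * (∫ ω, |ξ 0 ω| ^ x ∂P) ^ (r / x) := by
  have hsq : ∫ ω, |∑ i ∈ t, ξ i ω| ^ (2 : ℝ) ∂P = t.card * ∫ ω, ξ 0 ω ^ 2 ∂P := by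
    simpa [Real.rpow_two, sq_abs] using h.integral_sum_sq hx hint t
  calc ∫ ω, |∑ i ∈ t, ξ i ω| ^ r ∂P ≤ (∫ ω, |∑ i ∈ t, ξ i ω| ^ (2 : ℝ) ∂P) ^ (r / 2) :=
        integral_abs_rpow_le (t.measurable_sum fun i _ => h.measurable i).aestronglyMeasurable hr
          hr2 (h.integrable_abs_sum_rpow (by linarith) hint zero_le_two hx t)
    _ = (t.card : ℝ) ^ (r / 2) * (∫ ω, ξ 0 ω ^ 2 ∂P) ^ (r / 2) := by
        rw [hsq, Real.mul_rpow (by positivity) (integral_nonneg fun ω => sq_nonneg _)]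
    _ ≤ (t.card : ℝ) ^ (r / 2) * ((∫ ω, |ξ 0 ω| ^ x ∂P) ^ (2 / x)) ^ (r / 2) := by
        have hv0 : 0 ≤ ∫ ω, ξ 0 ω ^ 2 ∂P := integral_nonneg fun ω => sq_nonneg (ξ 0 ω)
        have hvm := h.integral_sq_le hx hint
        gcongr
    _ = (t.card : ℝ) ^ (r / 2) * (∫ ω, |ξ 0 ω| ^ x ∂P) ^ (r / x) := by
        rw [← Real.rpow_mul (integral_nonneg fun ω => by positivity)]
        congr 2
        field_simp

lemma integral_mul_sgnRpow_sum_le (h : IsIIDCentered ξ P) (hx : 2 ≤ x)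
    (hint : Integrable (fun ω => |ξ 0 ω| ^ x) P) {s : Finset ℕ} {i : ℕ} (hi : i ∈ s) :
    ∫ ω, ξ i ω * sgnRpow (x - 1) (∑ l ∈ s, ξ l ω) ∂P ≤
      (x - 1) * (3 * (∫ ω, |∑ l ∈ s.erase i, ξ l ω| ^ (x - 2) ∂P) * ∫ ω, ξ 0 ω ^ 2 ∂P +
        x ^ (x - 2) * ∫ ω, |ξ 0 ω| ^ x ∂P) := by
  set T' := fun ω => ∑ l ∈ s.erase i, ξ l ω
  have hT : ∀ ω, ∑ l ∈ s, ξ l ω = T' ω + ξ i ω := fun ω => (Finset.sum_erase_add _ _ hi).symm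
  have hξ := (h.measurable i).aestronglyMeasurable (μ := P)
  have hξx := h.integrable_abs_rpow hint (by linarith) le_rfl i
  have hψT := integrable_mul_sgnRpow hξ
    (s.measurable_sum fun l _ => h.measurable l).aestronglyMeasurable (by linarith) hξx
    (h.integrable_abs_sum_rpow (by linarith) hint (by linarith) le_rfl s)
  have hψT' := integrable_mul_sgnRpow hξ
    ((s.erase i).measurable_sum fun l _ => h.measurable l).aestronglyMeasurable (by linarith) hξx
    (h.integrable_abs_sum_rpow (by linarith) hint (by linarith) le_rfl (s.erase i))
  have hsplit_int : Integrable (fun ω => |T' ω| ^ (x - 2) * ξ i ω ^ 2) P :=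
    ((h.indepFun_sum_erase s i).comp (by fun_prop : Measurable fun t : ℝ => |t| ^ (x - 2))
      (by fun_prop : Measurable fun t : ℝ => t ^ 2)).integrable_mul
      (h.integrable_abs_sum_rpow (by linarith) hint (by linarith) (by linarith) (s.erase i))
      (by simpa [Function.comp_def, Real.rpow_two, sq_abs] using
        h.integrable_abs_rpow hint zero_le_two hx i)
  have hpoint : ∀ ω, ξ i ω * (sgnRpow (x - 1) (∑ l ∈ s, ξ l ω) - sgnRpow (x - 1) (T' ω)) ≤
      (x - 1) * (3 * (|T' ω| ^ (x - 2) * ξ i ω ^ 2) + x ^ (x - 2) * |ξ i ω| ^ x) := fun ω => by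
    have := mul_sgnRpow_add_sub_le (by linarith : 1 ≤ x - 1) (T' ω) (ξ i ω)
    rwa [show x - 1 - 1 = x - 2 by ring, show 1 + (x - 1) = x by ring,
      show x - 1 + 1 = x by ring, ← hT] at this
  calc ∫ ω, ξ i ω * sgnRpow (x - 1) (∑ l ∈ s, ξ l ω) ∂P
      = ∫ ω, ξ i ω * (sgnRpow (x - 1) (∑ l ∈ s, ξ l ω) - sgnRpow (x - 1) (T' ω)) ∂P := by
        simp only [mul_sub]
        rw [integral_sub hψT hψT', h.integral_mul_sgnRpow_sum_erase, sub_zero]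
    _ ≤ ∫ ω, (x - 1) * (3 * (|T' ω| ^ (x - 2) * ξ i ω ^ 2) + x ^ (x - 2) * |ξ i ω| ^ x) ∂P :=
        integral_mono (by simp only [mul_sub]; exact hψT.sub hψT')
          (((hsplit_int.const_mul 3).add (hξx.const_mul _)).const_mul _) hpoint
    _ = _ := by
        rw [integral_const_mul, integral_add (hsplit_int.const_mul 3) (hξx.const_mul _),
          integral_const_mul, integral_const_mul, h.integral_abs_sum_erase_rpow_mul_sq,
          h.integral_comp_eq (f := fun t => |t| ^ x) (by fun_prop)]
        ring

lemma integral_abs_sum_rpow_le_of_erase (h : IsIIDCentered ξ P) (hx : 2 ≤ x)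
    (hint : Integrable (fun ω => |ξ 0 ω| ^ x) P) (s : Finset ℕ) {D : ℝ}
    (hD : ∀ i ∈ s, ∫ ω, |∑ l ∈ s.erase i, ξ l ω| ^ (x - 2) ∂P ≤ D) :
    ∫ ω, |∑ i ∈ s, ξ i ω| ^ x ∂P ≤
      s.card * ((x - 1) * (3 * D * ∫ ω, ξ 0 ω ^ 2 ∂P + x ^ (x - 2) * ∫ ω, |ξ 0 ω| ^ x ∂P)) := by
  have hT : ∀ ω, |∑ i ∈ s, ξ i ω| ^ x =
      ∑ i ∈ s, ξ i ω * sgnRpow (x - 1) (∑ l ∈ s, ξ l ω) := fun ω => by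
    rw [← Finset.sum_mul, mul_sgnRpow (by linarith), sub_add_cancel]
  have hv : 0 ≤ ∫ ω, ξ 0 ω ^ 2 ∂P := integral_nonneg fun ω => sq_nonneg (ξ 0 ω)
  simp_rw [hT]
  rw [integral_finsetSum s fun i _ => integrable_mul_sgnRpow
    (h.measurable i).aestronglyMeasurable
    (s.measurable_sum fun l _ => h.measurable l).aestronglyMeasurable (by linarith)
    (h.integrable_abs_rpow hint (by linarith) le_rfl i)
    (h.integrable_abs_sum_rpow (by linarith) hint (by linarith) le_rfl s)]
  calc ∑ i ∈ s, ∫ ω, ξ i ω * sgnRpow (x - 1) (∑ l ∈ s, ξ l ω) ∂P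
      ≤ ∑ _i ∈ s, (x - 1) * (3 * D * ∫ ω, ξ 0 ω ^ 2 ∂P + x ^ (x - 2) * ∫ ω, |ξ 0 ω| ^ x ∂P) :=
        Finset.sum_le_sum fun i hi => (h.integral_mul_sgnRpow_sum_le hx hint hi).trans <| by
          have := hD i hi
          gcongr
          linarith
    _ = _ := by rw [Finset.sum_const, nsmul_eq_mul]

lemma integral_abs_sum_rpow_sub_two_le (h : IsIIDCentered ξ P) (hx : 2 ≤ x)
    (hint : Integrable (fun ω => |ξ 0 ω| ^ x) P)
    (ih : 4 ≤ x → ∀ t : Finset ℕ, ∫ ω, |∑ i ∈ t, ξ i ω| ^ (x - 2) ∂P ≤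
      (9 * (x - 2)) ^ ((x - 2) / 2) * (t.card : ℝ) ^ ((x - 2) / 2) * ∫ ω, |ξ 0 ω| ^ (x - 2) ∂P)
    (t : Finset ℕ) :
    ∫ ω, |∑ i ∈ t, ξ i ω| ^ (x - 2) ∂P ≤
      (9 * x) ^ ((x - 2) / 2) * (t.card : ℝ) ^ ((x - 2) / 2) *
        (∫ ω, |ξ 0 ω| ^ x ∂P) ^ ((x - 2) / x) := by
  rcases lt_or_ge x 4 with hx4 | hx4
  · calc ∫ ω, |∑ i ∈ t, ξ i ω| ^ (x - 2) ∂P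
        ≤ (t.card : ℝ) ^ ((x - 2) / 2) * (∫ ω, |ξ 0 ω| ^ x ∂P) ^ ((x - 2) / x) :=
          h.integral_abs_sum_rpow_le_of_le_two hx hint (by linarith) (by linarith) t
      _ ≤ _ := by
          rw [mul_assoc]
          exact le_mul_of_one_le_left (by positivity)
            (Real.one_le_rpow (by linarith) (by linarith))
  · refine (ih hx4 t).trans ?_
    have hlyap := integral_abs_rpow_le (h.measurable 0).aestronglyMeasurable (by linarith)
      (by linarith : x - 2 ≤ x) hint
    have hx2 : 0 ≤ (x - 2) / 2 := by linarith
    gcongr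
    linarith

theorem integral_abs_sum_rpow_le (h : IsIIDCentered ξ P) (hx : 2 ≤ x)
    (hint : Integrable (fun ω => |ξ 0 ω| ^ x) P) (s : Finset ℕ) :
    ∫ ω, |∑ i ∈ s, ξ i ω| ^ x ∂P ≤
      (9 * x) ^ (x / 2) * (s.card : ℝ) ^ (x / 2) * ∫ ω, |ξ 0 ω| ^ x ∂P := by
  obtain ⟨N, hN⟩ := exists_nat_ge x
  induction N generalizing x s with
  | zero => norm_num at hN; linarith
  | succ N ih =>
    have hm : 0 ≤ ∫ ω, |ξ 0 ω| ^ x ∂P := integral_nonneg fun ω => by positivity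
    rcases le_or_gt x s.card with hs | hs
    · have hD := h.integral_abs_sum_rpow_sub_two_le hx hint fun hx4 t =>
        ih (by linarith) (h.integrable_abs_rpow hint (by linarith) (by linarith) 0) t
          (by push_cast at hN; linarith)
      refine (h.integral_abs_sum_rpow_le_of_erase hx hint s fun i _ => (hD _).trans ?_).trans
        (rosenthal_step_le hx hs hm (integral_nonneg fun ω => sq_nonneg _)
          (h.integral_sq_le hx hint) le_rfl)
      have hx2 : 0 ≤ (x - 2) / 2 := by linarith
      gcongr
      exact Finset.erase_subset i s
    · calc ∫ ω, |∑ i ∈ s, ξ i ω| ^ x ∂P ≤ (s.card : ℝ) ^ x * ∫ ω, |ξ 0 ω| ^ x ∂P :=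
            h.integral_abs_sum_rpow_le_card (by linarith) hint s
        _ = (s.card : ℝ) ^ (x / 2) * (s.card : ℝ) ^ (x / 2) * ∫ ω, |ξ 0 ω| ^ x ∂P := by
            rw [← Real.rpow_add' (Nat.cast_nonneg _) (by linarith)]; ring_nf
        _ ≤ (9 * x) ^ (x / 2) * (s.card : ℝ) ^ (x / 2) * ∫ ω, |ξ 0 ω| ^ x ∂P := by
            gcongr
            linarith

lemma integrable_abs_normalizedSum_rpow (h : IsIIDCentered ξ P) (hx : 1 ≤ x)
    (hint : Integrable (fun ω => |ξ 0 ω| ^ x) P) (n : ℕ) :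
    Integrable (fun ω => |normalizedSum ξ n ω| ^ x) P := by
  simp_rw [normalizedSum, abs_mul, Real.mul_rpow (abs_nonneg _) (abs_nonneg _)]
  exact (h.integrable_abs_sum_rpow hx hint (by linarith) le_rfl _).const_mul _

lemma integral_abs_normalizedSum_rpow_le (h : IsIIDCentered ξ P) (hx : 2 ≤ x)
    (hint : Integrable (fun ω => |ξ 0 ω| ^ x) P) (n : ℕ) :
    ∫ ω, |normalizedSum ξ n ω| ^ x ∂P ≤ (9 * x) ^ (x / 2) * ∫ ω, |ξ 0 ω| ^ x ∂P := by
  rcases n.eq_zero_or_pos with rfl | hn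
  · simp [normalizedSum, Real.zero_rpow (by linarith : x ≠ 0)]
    exact mul_nonneg (by positivity) (integral_nonneg fun ω => by positivity)
  have hn' : (0 : ℝ) < n := Nat.cast_pos.mpr hn
  have hc : |(n : ℝ) ^ (-(1 / 2 : ℝ))| ^ x * (n : ℝ) ^ (x / 2) = 1 := by
    rw [abs_of_nonneg (by positivity), ← Real.rpow_mul hn'.le, ← Real.rpow_add hn']
    ring_nf
    exact Real.rpow_zero _
  simp_rw [normalizedSum, abs_mul, Real.mul_rpow (abs_nonneg _) (abs_nonneg _)]
  rw [integral_const_mul]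
  calc |(n : ℝ) ^ (-(1 / 2 : ℝ))| ^ x * ∫ ω, |∑ i ∈ Finset.range n, ξ i ω| ^ x ∂P
      ≤ |(n : ℝ) ^ (-(1 / 2 : ℝ))| ^ x *
          ((9 * x) ^ (x / 2) * (n : ℝ) ^ (x / 2) * ∫ ω, |ξ 0 ω| ^ x ∂P) := by
        gcongr
        simpa using h.integral_abs_sum_rpow_le hx hint (Finset.range n)
    _ = (|(n : ℝ) ^ (-(1 / 2 : ℝ))| ^ x * (n : ℝ) ^ (x / 2)) *
          ((9 * x) ^ (x / 2) * ∫ ω, |ξ 0 ω| ^ x ∂P) := by ring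
    _ = (9 * x) ^ (x / 2) * ∫ ω, |ξ 0 ω| ^ x ∂P := by rw [hc, one_mul]

lemma measureReal_lt_abs_normalizedSum_rpow_le (h : IsIIDCentered ξ P) {a p u : ℝ} (ha : 0 < a)
    (hp : 0 < p) (hap : 2 ≤ a * p) (hu : 0 < u)
    (hint : Integrable (fun ω => |ξ 0 ω| ^ (a * p)) P) (n : ℕ) :
    P.real {ω | u < |normalizedSum ξ n ω|} ^ (1 / a) ≤
      u ^ (-p) * (6 * (a * p / Real.log (a * p)) *
        (∫ ω, |ξ 0 ω| ^ (a * p) ∂P) ^ (1 / (a * p))) ^ p :=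
  (Real.rpow_le_rpow measureReal_nonneg
    (measureReal_lt_abs_le (by linarith) hu
      (h.integrable_abs_normalizedSum_rpow (by linarith) hint n)) (by positivity)).trans
    (moment_tail_rpow_le (integral_nonneg fun ω => by positivity)
      (integral_nonneg fun ω => by positivity) hu ha hp (by linarith)
      (h.integral_abs_normalizedSum_rpow_le hap hint n))

end IsIIDCentered

/-- Rosenthal-type tail estimate for the minimum of normalized sums: there is an
absolute constant `C` such that for any `k` groups of i.i.d. centered random
variables (no independence between groups), with `S_n(j) = n^{−1/2} Σ_{i<n} ξ_i⁽ʲ⁾`,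
`P( min_j |S_n(j)| > u ) ≤ u^{−Σ p_j} ∏_j [ C·(a_j p_j/ln(a_j p_j))·(E|ξ⁽ʲ⁾|^{a_j p_j})^{1/(a_j p_j)} ]^{p_j}`. -/
theorem rosenthal_min_tail_bound :
    ∃ C : ℝ, 0 < C ∧
      ∀ (Ω : Type) (mΩ : MeasurableSpace Ω) (P : Measure Ω), IsProbabilityMeasure P →
        ∀ (k : ℕ), 1 ≤ k → ∀ ξ : Fin k → ℕ → Ω → ℝ,
          (∀ j i, Measurable (ξ j i)) →
          -- for each group `j` the variables are independent ...
          (∀ j, iIndepFun (fun i => ξ j i) P) →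
          -- ... identically distributed ...
          (∀ j i, IdentDistrib (ξ j i) (ξ j 0) P P) →
          -- ... and centered:
          (∀ j i, ∫ ω, ξ j i ω ∂P = 0) →
          ∀ (p a : Fin k → ℝ), (∀ j, 2 ≤ p j) → (∀ j, 1 < a j) →
            (∑ j, 1 / a j) = 1 →
            (∀ j, Integrable (fun ω => |ξ j 0 ω| ^ (a j * p j)) P) →
            ∀ n : ℕ, 1 ≤ n → ∀ u : ℝ, 0 < u →
              P {ω | ∀ j, u < |(n : ℝ) ^ (-(1 / 2 : ℝ)) * ∑ i ∈ Finset.range n, ξ j i ω|} ≤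
                ENNReal.ofReal (u ^ (-(∑ j, p j)) *
                  ∏ j, (C * (a j * p j / Real.log (a j * p j)) *
                    (∫ ω, |ξ j 0 ω| ^ (a j * p j) ∂P) ^ (1 / (a j * p j))) ^ (p j)) := by
  refine ⟨6, by norm_num, ?_⟩
  intro Ω _ P _ k _ ξ hmeas hindep hid hcent p a hp ha hsum hint n _ u hu
  have htail : ∀ j, P.real {ω | u < |normalizedSum (ξ j) n ω|} ^ (1 / a j) ≤
      u ^ (-p j) * (6 * (a j * p j / Real.log (a j * p j)) *
        (∫ ω, |ξ j 0 ω| ^ (a j * p j) ∂P) ^ (1 / (a j * p j))) ^ p j := fun j =>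
    IsIIDCentered.measureReal_lt_abs_normalizedSum_rpow_le ⟨hmeas j, hindep j, hid j, hcent j⟩
      (by linarith [ha j]) (by linarith [hp j]) (by nlinarith [ha j, hp j]) hu (hint j) n
  change P {ω | ∀ j, u < |normalizedSum (ξ j) n ω|} ≤ _
  rw [← ofReal_measureReal, ofPred_forall]
  refine ENNReal.ofReal_le_ofReal ?_
  calc P.real (⋂ j, {ω | u < |normalizedSum (ξ j) n ω|})
      ≤ ∏ j, P.real {ω | u < |normalizedSum (ξ j) n ω|} ^ (1 / a j) :=
        measureReal_iInter_le_prod_rpow _ (fun j => by have := ha j; positivity) hsum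
    _ ≤ ∏ j, u ^ (-p j) * (6 * (a j * p j / Real.log (a j * p j)) *
          (∫ ω, |ξ j 0 ω| ^ (a j * p j) ∂P) ^ (1 / (a j * p j))) ^ p j :=
        Finset.prod_le_prod (fun j _ => by positivity) fun j _ => htail j
    _ = _ := by
        rw [Finset.prod_mul_distrib, ← Real.rpow_sum_of_pos hu, Finset.sum_neg_distrib]
end
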